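/- arXiv:2211.06749 — 5 statements merged into one kernel-verified Lean document; each statement's English description precedes it below -/
import Mathlib

section
/- Fix real numbers α, β with 0 ≤ α ≤ β ≤ π. Then there is a constant K (depending on α and β) such that for every integer n ≥ 1, the number of vertical boxes in C_{α,β}(n) satisfies | |C_{α,β,v}(n)| − (cos α − cos β)·n | ≤ K. -/
open Real Set Filter

/-- The open interior of the box `B_{i,j}(n) = [i/n,(i+1)/n] × [j/n,(j+1)/n]`. -/
def boxInt (n : ℕ) (i j : ℤ) : Set (ℝ × ℝ) :=
  {p | (i : ℝ) / n < p.1 ∧ p.1 < ((i : ℝ) + 1) / n ∧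
       (j : ℝ) / n < p.2 ∧ p.2 < ((j : ℝ) + 1) / n}

/-- The plane unit circle `C`. -/
def unitCircle : Set (ℝ × ℝ) := {p | p.1 ^ 2 + p.2 ^ 2 = 1}

/-- The approximation `X(n)` of a set `X ⊆ ℝ²`: the boxes (encoded by their index
pairs `(i,j) ∈ ℤ²`) whose open interior intersects `X`. -/
def approx (n : ℕ) (X : Set (ℝ × ℝ)) : Set (ℤ × ℤ) :=
  {ij | (boxInt n ij.1 ij.2 ∩ X).Nonempty}

/-- The open arc `C_{α,β} = {(cos t, sin t) : α < t < β}` of the unit circle. -/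
def arc (α β : ℝ) : Set (ℝ × ℝ) :=
  {p | ∃ t : ℝ, α < t ∧ t < β ∧ p = (Real.cos t, Real.sin t)}

/-- `p` lies on a vertical (left or right) side of the box `B_{i,j}(n)`. -/
def OnVerticalSide (n : ℕ) (i j : ℤ) (p : ℝ × ℝ) : Prop :=
  (p.1 = (i : ℝ) / n ∨ p.1 = ((i : ℝ) + 1) / n) ∧
  (j : ℝ) / n ≤ p.2 ∧ p.2 ≤ ((j : ℝ) + 1) / n

/-- `p` lies on a horizontal (bottom or top) side of the box `B_{i,j}(n)`. -/
def OnHorizontalSide (n : ℕ) (i j : ℤ) (p : ℝ × ℝ) : Prop :=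
  (p.2 = (j : ℝ) / n ∨ p.2 = ((j : ℝ) + 1) / n) ∧
  (i : ℝ) / n ≤ p.1 ∧ p.1 ≤ ((i : ℝ) + 1) / n

/-- The counter-clockwise oriented unit circle enters the box `B_{i,j}(n)` through
a vertical side: the box is vertical. -/
def IsVertical (n : ℕ) (i j : ℤ) : Prop :=
  ∃ t δ : ℝ, 0 < δ ∧ OnVerticalSide n i j (Real.cos t, Real.sin t) ∧
    ∀ s ∈ Set.Ioo t (t + δ), (Real.cos s, Real.sin s) ∈ boxInt n i j

/-- The counter-clockwise oriented unit circle enters the box `B_{i,j}(n)` through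
a horizontal side: the box is horizontal. -/
def IsHorizontal (n : ℕ) (i j : ℤ) : Prop :=
  ∃ t δ : ℝ, 0 < δ ∧ OnHorizontalSide n i j (Real.cos t, Real.sin t) ∧
    ∀ s ∈ Set.Ioo t (t + δ), (Real.cos s, Real.sin s) ∈ boxInt n i j

/-! ### Auxiliary lemmas -/

private lemma eventually_to_delta {t : ℝ} {p : ℝ → Prop} (h : ∀ᶠ s in nhds t, p s) :
    ∃ δ : ℝ, 0 < δ ∧ ∀ s ∈ Set.Ioo t (t + δ), p s := by
  rw [Metric.eventually_nhds_iff] at h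
  obtain ⟨ε, hε, h⟩ := h
  refine ⟨ε, hε, fun s hs => h ?_⟩
  rw [Real.dist_eq, abs_of_pos (by linarith [hs.1])]
  linarith [hs.2]

private lemma grid_unique {n : ℕ} (hn : 1 ≤ n) {j1 j2 : ℤ} {y : ℝ}
    (h1 : (j1 : ℝ) / n < y) (h1' : y < ((j1 : ℝ) + 1) / n)
    (h2 : (j2 : ℝ) / n < y) (h2' : y < ((j2 : ℝ) + 1) / n) : j1 = j2 := by
  have hn' : (0 : ℝ) < n := by exact_mod_cast hn
  have e1 : ⌊(n : ℝ) * y⌋ = j1 := by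
    rw [Int.floor_eq_iff]
    rw [div_lt_iff₀ hn'] at h1
    rw [lt_div_iff₀ hn'] at h1'
    constructor <;> nlinarith
  have e2 : ⌊(n : ℝ) * y⌋ = j2 := by
    rw [Int.floor_eq_iff]
    rw [div_lt_iff₀ hn'] at h2
    rw [lt_div_iff₀ hn'] at h2'
    constructor <;> nlinarith
  rw [← e1, e2]

private lemma approx_bounds {α β : ℝ} (h0 : 0 ≤ α) (hβ : β ≤ Real.pi) {n : ℕ} (hn : 1 ≤ n)
    {ij : ℤ × ℤ} (h : ij ∈ approx n (arc α β)) :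
    -(n : ℤ) ≤ ij.1 ∧ ij.1 ≤ (n : ℤ) - 1 ∧ 0 ≤ ij.2 ∧ ij.2 ≤ (n : ℤ) - 1 ∧
      ∃ u : ℝ, α < u ∧ u < β ∧
        (ij.1 : ℝ) / n < Real.cos u ∧ Real.cos u < ((ij.1 : ℝ) + 1) / n ∧
        (ij.2 : ℝ) / n < Real.sin u ∧ Real.sin u < ((ij.2 : ℝ) + 1) / n := by
  obtain ⟨p, hbox, u, hu1, hu2, rfl⟩ := h
  have hn' : (0 : ℝ) < n := by exact_mod_cast hn
  have b1 : (ij.1 : ℝ) / n < Real.cos u := hbox.1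
  have b2 : Real.cos u < ((ij.1 : ℝ) + 1) / n := hbox.2.1
  have b3 : (ij.2 : ℝ) / n < Real.sin u := hbox.2.2.1
  have b4 : Real.sin u < ((ij.2 : ℝ) + 1) / n := hbox.2.2.2
  have hu0 : 0 < u := lt_of_le_of_lt h0 hu1
  have huπ : u < Real.pi := lt_of_lt_of_le hu2 hβ
  have hsin : 0 < Real.sin u := Real.sin_pos_of_pos_of_lt_pi hu0 huπ
  have hsin1 : Real.sin u ≤ 1 := Real.sin_le_one u
  have hcos1 : Real.cos u < 1 := by
    have := Real.strictAntiOn_cos ⟨le_refl 0, Real.pi_pos.le⟩ ⟨hu0.le, huπ.le⟩ hu0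
    rwa [Real.cos_zero] at this
  have hcosm1 : -1 < Real.cos u := by
    have := Real.strictAntiOn_cos ⟨hu0.le, huπ.le⟩ ⟨Real.pi_pos.le, le_refl Real.pi⟩ huπ
    rwa [Real.cos_pi] at this
  rw [div_lt_iff₀ hn'] at b1 b3
  rw [lt_div_iff₀ hn'] at b2 b4
  have hi1 : -(n : ℤ) ≤ ij.1 := by
    have hr : (-(n : ℤ) : ℝ) - 1 < (ij.1 : ℝ) := by
      push_cast; nlinarith [mul_lt_mul_of_pos_left hcosm1 hn']
    have : -(n : ℤ) - 1 < ij.1 := by exact_mod_cast hr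
    omega
  have hi2 : ij.1 ≤ (n : ℤ) - 1 := by
    have hr : (ij.1 : ℝ) < (n : ℝ) := by
      nlinarith [mul_lt_mul_of_pos_left hcos1 hn']
    have : ij.1 < (n : ℤ) := by exact_mod_cast hr
    omega
  have hj1 : 0 ≤ ij.2 := by
    have hr : (-1 : ℝ) < (ij.2 : ℝ) := by
      nlinarith [mul_pos hsin hn']
    have : (-1 : ℤ) < ij.2 := by exact_mod_cast hr
    omega
  have hj2 : ij.2 ≤ (n : ℤ) - 1 := by
    have hr : (ij.2 : ℝ) < (n : ℝ) := by
      nlinarith [mul_le_mul_of_nonneg_right hsin1 hn'.le]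
    have : ij.2 < (n : ℤ) := by exact_mod_cast hr
    omega
  refine ⟨hi1, hi2, hj1, hj2, u, hu1, hu2, ?_, ?_, ?_, ?_⟩
  · rw [div_lt_iff₀ hn']; linarith
  · rw [lt_div_iff₀ hn']; linarith
  · rw [div_lt_iff₀ hn']; linarith
  · rw [lt_div_iff₀ hn']; linarith

/-- A vertical box (with the index bounds coming from intersecting the upper-half
arc) is entered at the canonical angle `arccos ((i+1)/n)`. -/
private lemma vertical_canonical {n : ℕ} (hn : 1 ≤ n) {i j : ℤ}
    (hi1 : -(n : ℤ) ≤ i) (hi2 : i ≤ (n : ℤ) - 1) (hj : 0 ≤ j)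
    (hv : IsVertical n i j) :
    ∃ δ : ℝ, 0 < δ ∧
      ∀ s ∈ Set.Ioo (Real.arccos (((i : ℝ) + 1) / n))
          (Real.arccos (((i : ℝ) + 1) / n) + δ),
        (Real.cos s, Real.sin s) ∈ boxInt n i j := by
  obtain ⟨t, δ, hδ, hside, hint⟩ := hv
  have hx : Real.cos t = (i : ℝ) / n ∨ Real.cos t = ((i : ℝ) + 1) / n := hside.1
  have hy1 : (j : ℝ) / n ≤ Real.sin t := hside.2.1
  have hn' : (0 : ℝ) < n := by exact_mod_cast hn
  have hπ := Real.pi_pos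
  have h2π : (0 : ℝ) < 2 * Real.pi := by linarith
  set k : ℤ := ⌊t / (2 * Real.pi)⌋ with hk
  set t' : ℝ := t - k * (2 * Real.pi) with ht'def
  have hcos' : Real.cos t' = Real.cos t := Real.cos_sub_int_mul_two_pi t k
  have hsin' : Real.sin t' = Real.sin t := Real.sin_sub_int_mul_two_pi t k
  have hfl1 : (k : ℝ) * (2 * Real.pi) ≤ t := (le_div_iff₀ h2π).mp (Int.floor_le _)
  have hfl2 : t < ((k : ℝ) + 1) * (2 * Real.pi) := by
    have := Int.lt_floor_add_one (t / (2 * Real.pi))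
    calc t = t / (2 * Real.pi) * (2 * Real.pi) := by field_simp
    _ < ((k : ℝ) + 1) * (2 * Real.pi) := by
        apply mul_lt_mul_of_pos_right _ h2π
        exact_mod_cast this
  have ht'0 : 0 ≤ t' := by rw [ht'def]; linarith
  have ht'2π : t' < 2 * Real.pi := by rw [ht'def]; nlinarith
  have hint' : ∀ s ∈ Set.Ioo t' (t' + δ), (Real.cos s, Real.sin s) ∈ boxInt n i j := by
    intro s hs
    have e1 : Real.cos s = Real.cos (s + k * (2 * Real.pi)) :=
      (Real.cos_add_int_mul_two_pi s k).symm
    have e2 : Real.sin s = Real.sin (s + k * (2 * Real.pi)) :=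
      (Real.sin_add_int_mul_two_pi s k).symm
    rw [e1, e2]
    exact hint _ ⟨by rw [ht'def] at hs; linarith [hs.1], by rw [ht'def] at hs; linarith [hs.2]⟩
  have hsnn : 0 ≤ Real.sin t' := by
    rw [hsin']
    have : (0 : ℝ) ≤ (j : ℝ) / n := div_nonneg (by exact_mod_cast hj) hn'.le
    linarith
  have ht'le : t' ≤ Real.pi := by
    by_contra hlt
    push_neg at hlt
    have hneg : Real.sin t' < 0 := by
      have h := Real.sin_pos_of_pos_of_lt_pi (x := t' - Real.pi) (by linarith) (by linarith)
      rw [Real.sin_sub_pi] at h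
      linarith
    linarith
  -- t' < π: otherwise the circle goes below the x-axis right after entry
  have ht'ltπ : t' < Real.pi := by
    rcases lt_or_eq_of_le ht'le with h | he
    · exact h
    exfalso
    set s : ℝ := Real.pi + min δ Real.pi / 2 with hsdef
    have hmin : 0 < min δ Real.pi := lt_min hδ hπ
    have hs : s ∈ Set.Ioo t' (t' + δ) := by
      rw [he]
      constructor
      · rw [hsdef]; linarith
      · rw [hsdef]; have := min_le_left δ Real.pi; linarith
    have h3 := hint' s hs
    have h3' : (j : ℝ) / n < Real.sin s := h3.2.2.1
    have hsneg : Real.sin s < 0 := by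
      have h := Real.sin_pos_of_pos_of_lt_pi (x := s - Real.pi)
        (by rw [hsdef]; linarith) (by rw [hsdef]; have := min_le_right δ Real.pi; linarith)
      rw [Real.sin_sub_pi] at h
      linarith
    have : (0 : ℝ) ≤ (j : ℝ) / n := div_nonneg (by exact_mod_cast hj) hn'.le
    linarith
  -- the entry must be through the right side
  have hcoseq : Real.cos t' = ((i : ℝ) + 1) / n := by
    rcases hx with h | h
    · exfalso
      set s : ℝ := (t' + min (t' + δ) Real.pi) / 2 with hsdef
      have hmin1 : t' < min (t' + δ) Real.pi := lt_min (by linarith) ht'ltπ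
      have hs1 : t' < s := by rw [hsdef]; linarith
      have hs2 : s < t' + δ := by
        have := min_le_left (t' + δ) Real.pi
        rw [hsdef]; linarith
      have hsπ : s ≤ Real.pi := by
        have := min_le_right (t' + δ) Real.pi
        rw [hsdef]; linarith
      have hlt : Real.cos s < Real.cos t' :=
        Real.strictAntiOn_cos ⟨ht'0, ht'le⟩ ⟨by linarith, hsπ⟩ hs1
      have h4 : (i : ℝ) / n < Real.cos s := (hint' s ⟨hs1, hs2⟩).1
      rw [hcos', h] at hlt
      linarith
    · rw [hcos', h]
  have hteq : t' = Real.arccos (((i : ℝ) + 1) / n) := by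
    rw [← hcoseq, Real.arccos_cos ht'0 ht'le]
  exact ⟨δ, hδ, by rw [← hteq]; exact hint'⟩

set_option maxHeartbeats 1000000 in
/-- Existence of a vertical box on each vertical grid line crossed by the arc. -/
private lemma exists_vertical {α β : ℝ} (h0 : 0 ≤ α) (hαβ : α ≤ β) (hβ : β ≤ Real.pi)
    {n : ℕ} (hn : 1 ≤ n) {m : ℤ} (h1 : (n : ℝ) * Real.cos β < m)
    (h2 : (m : ℝ) ≤ (n : ℝ) * Real.cos α) :
    ∃ j : ℤ, (m - 1, j) ∈ approx n (arc α β) ∧ IsVertical n (m - 1) j := by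
  have hn' : (0 : ℝ) < n := by exact_mod_cast hn
  have hπ := Real.pi_pos
  set x : ℝ := (m : ℝ) / n with hxdef
  have hx1 : -1 ≤ x := by
    have h := Real.neg_one_le_cos β
    rw [hxdef, le_div_iff₀ hn']; nlinarith
  have hx2 : x ≤ 1 := by
    have h := Real.cos_le_one α
    rw [hxdef, div_le_one hn']; nlinarith
  set t : ℝ := Real.arccos x with htdef
  have ht0 : 0 ≤ t := Real.arccos_nonneg x
  have htπ' : t ≤ Real.pi := Real.arccos_le_pi x
  have hcost : Real.cos t = x := Real.cos_arccos hx1 hx2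
  have hαIcc : α ∈ Set.Icc 0 Real.pi := ⟨h0, le_trans hαβ hβ⟩
  have hβIcc : β ∈ Set.Icc 0 Real.pi := ⟨le_trans h0 hαβ, hβ⟩
  have htα : α ≤ t := by
    by_contra hc
    push_neg at hc
    have hlt : Real.cos α < Real.cos t :=
      Real.strictAntiOn_cos ⟨ht0, htπ'⟩ hαIcc hc
    have hxle : x ≤ Real.cos α := by rw [hxdef, div_le_iff₀ hn']; nlinarith
    rw [hcost] at hlt; linarith
  have htβ : t < β := by
    by_contra hc
    push_neg at hc
    have hle : Real.cos t ≤ Real.cos β :=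
      Real.strictAntiOn_cos.antitoneOn hβIcc ⟨ht0, htπ'⟩ hc
    have hxgt : Real.cos β < x := by rw [hxdef, lt_div_iff₀ hn']; nlinarith
    rw [hcost] at hle; linarith
  have htπ : t < Real.pi := lt_of_lt_of_le htβ hβ
  have hsint : 0 ≤ Real.sin t := Real.sin_nonneg_of_nonneg_of_le_pi ht0 htπ'
  have hcast : ((m - 1 : ℤ) : ℝ) = (m : ℝ) - 1 := by push_cast; ring
  -- choose the vertical index j and control sin on a right-neighbourhood of t
  have key : ∃ j : ℤ, ((j : ℝ) / n ≤ Real.sin t ∧ Real.sin t ≤ ((j : ℝ) + 1) / n) ∧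
      ∃ δ0 : ℝ, 0 < δ0 ∧ ∀ s ∈ Set.Ioo t (t + δ0),
        (j : ℝ) / n < Real.sin s ∧ Real.sin s < ((j : ℝ) + 1) / n := by
    by_cases hk : ∃ k : ℤ, (k : ℝ) = (n : ℝ) * Real.sin t
    · obtain ⟨k, hkk⟩ := hk
      have hsin_eq : Real.sin t = (k : ℝ) / n := by
        rw [eq_div_iff hn'.ne']; linarith [hkk]
      by_cases hm : 0 < m
      · -- sin is increasing right after t
        have hco : 0 < Real.cos t := by
          rw [hcost, hxdef]
          apply div_pos _ hn'
          exact_mod_cast hm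
        have htlt : t < Real.pi / 2 := by
          by_contra hc
          push_neg at hc
          have := Real.cos_nonpos_of_pi_div_two_le_of_le hc (by linarith)
          linarith
        have hev : ∀ᶠ s in nhds t, Real.sin s < ((k : ℝ) + 1) / n :=
          (Real.continuous_sin.continuousAt).eventually
            (eventually_lt_nhds (by
              rw [hsin_eq, div_lt_div_iff₀ hn' hn']; nlinarith))
        obtain ⟨δ1, hδ1, hδ1p⟩ := eventually_to_delta hev
        refine ⟨k, ⟨le_of_eq hsin_eq.symm, by
          rw [hsin_eq, div_le_div_iff₀ hn' hn']; nlinarith⟩,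
          min δ1 (Real.pi / 2 - t), lt_min hδ1 (by linarith), ?_⟩
        intro s hs
        have hsle : s ≤ Real.pi / 2 := by
          have := min_le_right δ1 (Real.pi / 2 - t); linarith [hs.2]
        constructor
        · rw [← hsin_eq]
          exact Real.strictMonoOn_sin ⟨by linarith, by linarith⟩
            ⟨by linarith [hs.1], hsle⟩ hs.1
        · exact hδ1p s ⟨hs.1, by
            have := min_le_left δ1 (Real.pi / 2 - t); linarith [hs.2]⟩
      · -- sin is decreasing right after t
        push_neg at hm
        have hmr : (m : ℝ) ≤ 0 := by exact_mod_cast hm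
        have hco : Real.cos t ≤ 0 := by
          rw [hcost, hxdef]
          exact div_nonpos_of_nonpos_of_nonneg hmr hn'.le
        have htge : Real.pi / 2 ≤ t := by
          by_contra hc
          push_neg at hc
          have := Real.cos_pos_of_mem_Ioo ⟨by linarith, hc⟩
          linarith
        have hev : ∀ᶠ s in nhds t, ((k : ℝ) - 1) / n < Real.sin s :=
          (Real.continuous_sin.continuousAt).eventually
            (eventually_gt_nhds (by
              rw [hsin_eq, div_lt_div_iff₀ hn' hn']; nlinarith))
        obtain ⟨δ1, hδ1, hδ1p⟩ := eventually_to_delta hev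
        have mono : ∀ s : ℝ, t < s → s ≤ Real.pi → Real.sin s < Real.sin t := by
          intro s hts hsπ
          have e1 : Real.sin s = Real.cos (s - Real.pi / 2) := by
            rw [show s - Real.pi / 2 = -(Real.pi / 2 - s) by ring, Real.cos_neg,
              Real.cos_pi_div_two_sub]
          have e2 : Real.sin t = Real.cos (t - Real.pi / 2) := by
            rw [show t - Real.pi / 2 = -(Real.pi / 2 - t) by ring, Real.cos_neg,
              Real.cos_pi_div_two_sub]
          rw [e1, e2]
          exact Real.strictAntiOn_cos ⟨by linarith, by linarith⟩
            ⟨by linarith, by linarith⟩ (by linarith)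
        have hcst : ((k - 1 : ℤ) : ℝ) = (k : ℝ) - 1 := by push_cast; ring
        refine ⟨k - 1, ⟨?_, ?_⟩, min δ1 (Real.pi - t), lt_min hδ1 (by linarith), ?_⟩
        · rw [hcst, hsin_eq, div_le_div_iff₀ hn' hn']; nlinarith
        · rw [hcst, show (k : ℝ) - 1 + 1 = (k : ℝ) by ring, hsin_eq]
        · intro s hs
          have hsle : s ≤ Real.pi := by
            have := min_le_right δ1 (Real.pi - t); linarith [hs.2]
          constructor
          · have h5 := hδ1p s ⟨hs.1, by
              have := min_le_left δ1 (Real.pi - t); linarith [hs.2]⟩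
            rw [hcst]; exact h5
          · have hlt := mono s hs.1 hsle
            rw [hsin_eq] at hlt
            rw [hcst, show (k : ℝ) - 1 + 1 = (k : ℝ) by ring]
            exact hlt
    · -- sin t is not on a grid line
      push_neg at hk
      set j : ℤ := ⌊(n : ℝ) * Real.sin t⌋ with hjdef
      have hjl : (j : ℝ) < (n : ℝ) * Real.sin t :=
        lt_of_le_of_ne (Int.floor_le _) (hk j)
      have hjr : (n : ℝ) * Real.sin t < (j : ℝ) + 1 := by
        have := Int.lt_floor_add_one ((n : ℝ) * Real.sin t)
        exact_mod_cast this
      have hs1 : (j : ℝ) / n < Real.sin t := by rw [div_lt_iff₀ hn']; nlinarith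
      have hs2 : Real.sin t < ((j : ℝ) + 1) / n := by rw [lt_div_iff₀ hn']; nlinarith
      have hev : ∀ᶠ s in nhds t,
          (j : ℝ) / n < Real.sin s ∧ Real.sin s < ((j : ℝ) + 1) / n := by
        have a1 := (Real.continuous_sin.continuousAt (x := t)).eventually
          (eventually_gt_nhds hs1)
        have a2 := (Real.continuous_sin.continuousAt (x := t)).eventually
          (eventually_lt_nhds hs2)
        exact a1.and a2
      obtain ⟨δ1, hδ1, hδ1p⟩ := eventually_to_delta hev
      exact ⟨j, ⟨hs1.le, hs2.le⟩, δ1, hδ1, hδ1p⟩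
  obtain ⟨j, ⟨hside1, hside2⟩, δ0, hδ0, hP⟩ := key
  -- control cos on a right-neighbourhood of t
  have hevc : ∀ᶠ s in nhds t, ((m : ℝ) - 1) / n < Real.cos s :=
    (Real.continuous_cos.continuousAt).eventually
      (eventually_gt_nhds (by
        rw [hcost, hxdef, div_lt_div_iff₀ hn' hn']; nlinarith))
  obtain ⟨δ2, hδ2, hδ2p⟩ := eventually_to_delta hevc
  set δ : ℝ := min (min δ0 δ2) (Real.pi - t) with hδdef
  have hδpos : 0 < δ := lt_min (lt_min hδ0 hδ2) (by linarith)
  have hbox : ∀ s ∈ Set.Ioo t (t + δ), (Real.cos s, Real.sin s) ∈ boxInt n (m - 1) j := by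
    intro s hs
    have hb1 : δ ≤ δ0 := le_trans (min_le_left _ _) (min_le_left _ _)
    have hb2 : δ ≤ δ2 := le_trans (min_le_left _ _) (min_le_right _ _)
    have hb3 : δ ≤ Real.pi - t := min_le_right _ _
    have h1 := hP s ⟨hs.1, by linarith [hs.2]⟩
    have h2 := hδ2p s ⟨hs.1, by linarith [hs.2]⟩
    have h3 : Real.cos s < Real.cos t :=
      Real.strictAntiOn_cos ⟨ht0, htπ'⟩
        ⟨by linarith [hs.1], by linarith [hs.2]⟩ hs.1
    refine ⟨?_, ?_, h1.1, h1.2⟩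
    · show ((m - 1 : ℤ) : ℝ) / n < Real.cos s
      rw [hcast]; exact h2
    · show Real.cos s < (((m - 1 : ℤ) : ℝ) + 1) / n
      rw [hcast, show (m : ℝ) - 1 + 1 = (m : ℝ) by ring]
      rw [hcost, hxdef] at h3
      exact h3
  have hvert : IsVertical n (m - 1) j := by
    refine ⟨t, δ, hδpos, ⟨Or.inr ?_, hside1, hside2⟩, hbox⟩
    show Real.cos t = (((m - 1 : ℤ) : ℝ) + 1) / n
    rw [hcast, show (m : ℝ) - 1 + 1 = (m : ℝ) by ring, hcost, hxdef]
  set s0 : ℝ := t + min δ (β - t) / 2 with hs0def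
  have hmin0 : 0 < min δ (β - t) := lt_min hδpos (by linarith)
  have hs0 : s0 ∈ Set.Ioo t (t + δ) := by
    constructor
    · rw [hs0def]; linarith
    · rw [hs0def]; have := min_le_left δ (β - t); linarith
  have hs0β : s0 < β := by
    rw [hs0def]; have := min_le_right δ (β - t); linarith
  have hs0α : α < s0 := lt_of_le_of_lt htα hs0.1
  exact ⟨j, ⟨(Real.cos s0, Real.sin s0), hbox s0 hs0, s0, hs0α, hs0β, rfl⟩, hvert⟩

set_option maxHeartbeats 1000000 in
theorem count_vertical_boxes (α β : ℝ) (h0 : 0 ≤ α) (hαβ : α ≤ β) (hβ : β ≤ Real.pi) :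
    ∃ K : ℝ, ∀ n : ℕ, 1 ≤ n →
      |({ij ∈ approx n (arc α β) | IsVertical n ij.1 ij.2}.ncard : ℝ)
        - (Real.cos α - Real.cos β) * n| ≤ K := by
  refine ⟨2, fun n hn => ?_⟩
  have hn' : (0 : ℝ) < n := by exact_mod_cast hn
  set S : Set (ℤ × ℤ) := {ij ∈ approx n (arc α β) | IsVertical n ij.1 ij.2} with hSdef
  set A : ℤ := ⌊(n : ℝ) * Real.cos α⌋ with hAdef
  set B : ℤ := ⌊(n : ℝ) * Real.cos β⌋ with hBdef
  have hαIcc : α ∈ Set.Icc 0 Real.pi := ⟨h0, le_trans hαβ hβ⟩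
  have hβIcc : β ∈ Set.Icc 0 Real.pi := ⟨le_trans h0 hαβ, hβ⟩
  -- finiteness
  have hsub : S ⊆ (Set.Icc (-(n : ℤ)) ((n : ℤ) - 1)) ×ˢ (Set.Icc 0 ((n : ℤ) - 1)) := by
    intro ij hij
    obtain ⟨b1, b2, b3, b4, _⟩ := approx_bounds h0 hβ hn hij.1
    exact ⟨⟨b1, b2⟩, b3, b4⟩
  have hfin : S.Finite := ((Set.finite_Icc _ _).prod (Set.finite_Icc _ _)).subset hsub
  -- upper bound: first coordinate is injective on S and lands in Icc B A
  have hinj : Set.InjOn Prod.fst S := by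
    rintro ⟨i, j1⟩ hp ⟨i2, j2⟩ hq heq
    simp only [Prod.fst] at heq
    subst heq
    obtain ⟨b1, b2, b3, _⟩ := approx_bounds h0 hβ hn hp.1
    obtain ⟨_, _, b3', _⟩ := approx_bounds h0 hβ hn hq.1
    obtain ⟨δ1, hδ1, hc1⟩ := vertical_canonical hn b1 b2 b3 hp.2
    obtain ⟨δ2, hδ2, hc2⟩ := vertical_canonical hn b1 b2 b3' hq.2
    set t0 : ℝ := Real.arccos (((i : ℝ) + 1) / n) with ht0def
    set s : ℝ := t0 + min δ1 δ2 / 2 with hsdef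
    have hmin : 0 < min δ1 δ2 := lt_min hδ1 hδ2
    have hs1 : s ∈ Set.Ioo t0 (t0 + δ1) := by
      constructor
      · rw [hsdef]; linarith
      · rw [hsdef]; have := min_le_left δ1 δ2; linarith
    have hs2 : s ∈ Set.Ioo t0 (t0 + δ2) := by
      constructor
      · rw [hsdef]; linarith
      · rw [hsdef]; have := min_le_right δ1 δ2; linarith
    have m1 := hc1 s hs1
    have m2 := hc2 s hs2
    have g1 : (j1 : ℝ) / n < Real.sin s := m1.2.2.1
    have g2 : Real.sin s < ((j1 : ℝ) + 1) / n := m1.2.2.2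
    have g3 : (j2 : ℝ) / n < Real.sin s := m2.2.2.1
    have g4 : Real.sin s < ((j2 : ℝ) + 1) / n := m2.2.2.2
    have : j1 = j2 := grid_unique hn g1 g2 g3 g4
    rw [this]
  have himg : ∀ p ∈ S, p.1 ∈ Set.Icc B A := by
    intro p hp
    obtain ⟨_, _, _, _, u, hu1, hu2, c1, c2, _, _⟩ := approx_bounds h0 hβ hn hp.1
    have huIcc : u ∈ Set.Icc 0 Real.pi := ⟨le_trans h0 hu1.le, le_trans hu2.le hβ⟩
    have hcα : Real.cos u < Real.cos α := Real.strictAntiOn_cos hαIcc huIcc hu1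
    have hcβ : Real.cos β < Real.cos u := Real.strictAntiOn_cos huIcc hβIcc hu2
    rw [div_lt_iff₀ hn'] at c1
    rw [lt_div_iff₀ hn'] at c2
    constructor
    · -- B ≤ p.1
      have hfl : (B : ℝ) ≤ (n : ℝ) * Real.cos β := Int.floor_le _
      have : (B : ℝ) < (p.1 : ℝ) + 1 := by nlinarith
      have : B < p.1 + 1 := by exact_mod_cast this
      omega
    · -- p.1 ≤ A
      apply Int.le_floor.mpr
      nlinarith
  have upper : S.ncard ≤ (A + 1 - B).toNat := by
    have h1 : S.ncard ≤ (Set.Icc B A).ncard :=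
      Set.ncard_le_ncard_of_injOn Prod.fst himg hinj (Set.finite_Icc B A)
    have h2 : (Set.Icc B A).ncard = (A + 1 - B).toNat := by
      rw [← Finset.coe_Icc, Set.ncard_coe_finset, Int.card_Icc]
    rwa [h2] at h1
  -- lower bound
  have hex : ∀ m : ℤ, ∃ j : ℤ, m ∈ Set.Ioc B A →
      ((m - 1, j) ∈ approx n (arc α β) ∧ IsVertical n (m - 1) j) := by
    intro m
    by_cases hm : m ∈ Set.Ioc B A
    · have hm1 : (n : ℝ) * Real.cos β < m := by
        have h := Int.lt_floor_add_one ((n : ℝ) * Real.cos β)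
        have : (B : ℝ) + 1 ≤ (m : ℝ) := by exact_mod_cast hm.1
        linarith
      have hm2 : (m : ℝ) ≤ (n : ℝ) * Real.cos α := by
        have h := Int.floor_le ((n : ℝ) * Real.cos α)
        have : (m : ℝ) ≤ (A : ℝ) := by exact_mod_cast hm.2
        linarith
      obtain ⟨j, hj1, hj2⟩ := exists_vertical h0 hαβ hβ hn hm1 hm2
      exact ⟨j, fun _ => ⟨hj1, hj2⟩⟩
    · exact ⟨0, fun h => absurd h hm⟩
  choose F hF using hex
  have hmaps : ∀ m ∈ Set.Ioc B A, (fun m : ℤ => (m - 1, F m)) m ∈ S :=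
    fun m hm => ⟨(hF m hm).1, (hF m hm).2⟩
  have hinj2 : Set.InjOn (fun m : ℤ => (m - 1, F m)) (Set.Ioc B A) := by
    intro a _ b _ h
    have := congrArg Prod.fst h
    simp only [Prod.fst] at this
    omega
  have lower : (A - B).toNat ≤ S.ncard := by
    have h1 : (Set.Ioc B A).ncard ≤ S.ncard :=
      Set.ncard_le_ncard_of_injOn _ hmaps hinj2 hfin
    have h2 : (Set.Ioc B A).ncard = (A - B).toNat := by
      rw [← Finset.coe_Ioc, Set.ncard_coe_finset, Int.card_Ioc]
    rwa [h2] at h1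
  -- arithmetic
  have hcc : Real.cos β ≤ Real.cos α :=
    Real.strictAntiOn_cos.antitoneOn hαIcc hβIcc hαβ
  have hA1 : (A : ℝ) ≤ (n : ℝ) * Real.cos α := Int.floor_le _
  have hA2 : (n : ℝ) * Real.cos α < (A : ℝ) + 1 := Int.lt_floor_add_one _
  have hB1 : (B : ℝ) ≤ (n : ℝ) * Real.cos β := Int.floor_le _
  have hB2 : (n : ℝ) * Real.cos β < (B : ℝ) + 1 := Int.lt_floor_add_one _
  have hABnn : 0 ≤ A - B := by
    have : (B : ℝ) < (A : ℝ) + 1 := by nlinarith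
    have : B < A + 1 := by exact_mod_cast this
    omega
  have htn1 : ((A - B).toNat : ℝ) = (A : ℝ) - B := by
    have h := Int.toNat_of_nonneg hABnn
    exact_mod_cast congrArg (Int.cast : ℤ → ℝ) h
  have htn2 : ((A + 1 - B).toNat : ℝ) = (A : ℝ) + 1 - B := by
    have h := Int.toNat_of_nonneg (show (0:ℤ) ≤ A + 1 - B by omega)
    exact_mod_cast congrArg (Int.cast : ℤ → ℝ) h
  have hl : ((A - B).toNat : ℝ) ≤ (S.ncard : ℝ) := by exact_mod_cast lower
  have hu : (S.ncard : ℝ) ≤ ((A + 1 - B).toNat : ℝ) := by exact_mod_cast upper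
  rw [htn1] at hl
  rw [htn2] at hu
  rw [abs_le]
  constructor <;> nlinarith
end

section
/- Fix real numbers α, β with −π/2 ≤ α ≤ β ≤ π/2. Then there is a constant K (depending on α and β) such that for every integer n ≥ 1, the number of horizontal boxes in C_{α,β}(n) satisfies | |C_{α,β,h}(n)| − (sin β − sin α)·n | ≤ K. -/
open Real Set Filter

/-!
In the right half-plane the counter-clockwise circle moves upwards, so a horizontal box
`B_{i,j}(n)` with `i ≥ 0` is entered through its bottom side, at the unique point of the circle
of height `j / n` and nonnegative abscissa; the box is therefore determined by its row `j`.
Conversely, for every row with `sin α ≤ j / n < sin β` the circle enters a box of that row at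
the angle `arcsin (j / n)`, while every box meeting the arc lies in a row with
`sin α - 1 / n < j / n < sin β`. The number of horizontal boxes thus lies between
`⌈n sin β⌉ - ⌈n sin α⌉` and that number plus one.
-/

open Topology

section Cells

variable {f : ℝ → ℝ} {t₀ b l u : ℝ}

lemma eventually_mem_Ioo_of_strictMonoOn (hf : ContinuousAt f t₀) (hb : t₀ < b)
    (hmono : StrictMonoOn f (Ico t₀ b)) (hl : l ≤ f t₀) (hu : f t₀ < u) :
    ∀ᶠ s in 𝓝[>] t₀, f s ∈ Ioo l u := by
  have hgt : ∀ᶠ s in 𝓝[>] t₀, f t₀ < f s := by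
    filter_upwards [Ioo_mem_nhdsGT hb] with s hs
    exact hmono ⟨le_rfl, hb⟩ ⟨hs.1.le, hs.2⟩ hs.1
  have hlt : ∀ᶠ s in 𝓝[>] t₀, f s < u :=
    nhdsWithin_le_nhds (hf.eventually (gt_mem_nhds hu))
  filter_upwards [hgt, hlt] with s hgt hlt using ⟨hl.trans_lt hgt, hlt⟩

lemma eventually_mem_Ioo_of_strictAntiOn (hf : ContinuousAt f t₀) (hb : t₀ < b)
    (hanti : StrictAntiOn f (Ico t₀ b)) (hl : l < f t₀) (hu : f t₀ ≤ u) :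
    ∀ᶠ s in 𝓝[>] t₀, f s ∈ Ioo l u := by
  have hlt : ∀ᶠ s in 𝓝[>] t₀, f s < f t₀ := by
    filter_upwards [Ioo_mem_nhdsGT hb] with s hs
    exact hanti ⟨le_rfl, hb⟩ ⟨hs.1.le, hs.2⟩ hs.1
  have hgt : ∀ᶠ s in 𝓝[>] t₀, l < f s :=
    nhdsWithin_le_nhds (hf.eventually (lt_mem_nhds hl))
  filter_upwards [hgt, hlt] with s hgt hlt using ⟨hgt, hlt.trans_le hu⟩

variable {n : ℕ}

lemma exists_cell_of_strictMonoOn (hn : 0 < n) (hf : ContinuousAt f t₀) (hb : t₀ < b)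
    (hmono : StrictMonoOn f (Ico t₀ b)) :
    ∃ i : ℤ, f t₀ ∈ Icc (i / n : ℝ) ((i + 1) / n) ∧
      ∀ᶠ s in 𝓝[>] t₀, f s ∈ Ioo (i / n : ℝ) ((i + 1) / n) := by
  have hn' : (0 : ℝ) < n := Nat.cast_pos.2 hn
  have hl : (⌊f t₀ * n⌋ / n : ℝ) ≤ f t₀ := (div_le_iff₀ hn').2 (Int.floor_le _)
  have hu : f t₀ < (⌊f t₀ * n⌋ + 1) / n := (lt_div_iff₀ hn').2 (Int.lt_floor_add_one _)
  exact ⟨⌊f t₀ * n⌋, ⟨hl, hu.le⟩, eventually_mem_Ioo_of_strictMonoOn hf hb hmono hl hu⟩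

lemma exists_cell_of_strictAntiOn (hn : 0 < n) (hf : ContinuousAt f t₀) (hb : t₀ < b)
    (hanti : StrictAntiOn f (Ico t₀ b)) :
    ∃ i : ℤ, f t₀ ∈ Icc (i / n : ℝ) ((i + 1) / n) ∧
      ∀ᶠ s in 𝓝[>] t₀, f s ∈ Ioo (i / n : ℝ) ((i + 1) / n) := by
  have hn' : (0 : ℝ) < n := Nat.cast_pos.2 hn
  have hl : ((⌈f t₀ * n⌉ - 1 : ℤ) / n : ℝ) < f t₀ := by
    rw [div_lt_iff₀ hn']; push_cast; linarith [Int.ceil_lt_add_one (f t₀ * n)]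
  have hu : f t₀ ≤ ((⌈f t₀ * n⌉ - 1 : ℤ) + 1) / n := by
    rw [le_div_iff₀ hn']; push_cast; linarith [Int.le_ceil (f t₀ * n)]
  exact ⟨⌈f t₀ * n⌉ - 1, ⟨hl.le, hu⟩, eventually_mem_Ioo_of_strictAntiOn hf hb hanti hl hu⟩

lemma floor_mul_eq_of_mem_Ioo (hn : 0 < n) {x : ℝ} {i : ℤ}
    (hx : x ∈ Ioo (i / n : ℝ) ((i + 1) / n)) : ⌊x * n⌋ = i := by
  have hn' : (0 : ℝ) < n := Nat.cast_pos.2 hn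
  exact Int.floor_eq_iff.2 ⟨((div_lt_iff₀ hn').1 hx.1).le, (lt_div_iff₀ hn').1 hx.2⟩

end Cells

lemma strictMonoOn_cos_Icc_neg_pi_zero : StrictMonoOn cos (Icc (-π) 0) := by
  intro x hx y hy hxy
  rw [← cos_neg x, ← cos_neg y]
  exact strictAntiOn_cos ⟨by linarith [hy.2], by linarith [hy.1]⟩
    ⟨by linarith [hx.2], by linarith [hx.1]⟩ (neg_lt_neg hxy)

lemma exists_cell_cos {n : ℕ} (hn : 0 < n) {t₀ : ℝ} (h₁ : -π ≤ t₀) (h₂ : t₀ < π) :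
    ∃ i : ℤ, cos t₀ ∈ Icc (i / n : ℝ) ((i + 1) / n) ∧
      ∀ᶠ s in 𝓝[>] t₀, cos s ∈ Ioo (i / n : ℝ) ((i + 1) / n) := by
  rcases lt_or_ge t₀ 0 with ht | ht
  · exact exists_cell_of_strictMonoOn hn continuous_cos.continuousAt ht
      (strictMonoOn_cos_Icc_neg_pi_zero.mono fun s hs => ⟨h₁.trans hs.1, hs.2.le⟩)
  · exact exists_cell_of_strictAntiOn hn continuous_cos.continuousAt h₂
      (strictAntiOn_cos.mono fun s hs => ⟨ht.trans hs.1, hs.2.le⟩)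

lemma isHorizontal_of_eventually {n : ℕ} {i j : ℤ} {t : ℝ}
    (hside : OnHorizontalSide n i j (cos t, sin t))
    (hbox : ∀ᶠ s in 𝓝[>] t, (cos s, sin s) ∈ boxInt n i j) : IsHorizontal n i j := by
  obtain ⟨u, htu, hsub⟩ := (nhdsGT_basis t).eventually_iff.1 hbox
  exact ⟨t, u - t, sub_pos.2 htu, hside, fun s hs => hsub ⟨hs.1, by linarith [hs.2]⟩⟩

lemma mem_approx_arc {n : ℕ} {α β : ℝ} {i j : ℤ} :
    (i, j) ∈ approx n (arc α β) ↔ ∃ t ∈ Ioo α β, (cos t, sin t) ∈ boxInt n i j := by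
  constructor
  · rintro ⟨_, hp, t, hα, hβ, rfl⟩
    exact ⟨t, ⟨hα, hβ⟩, hp⟩
  · rintro ⟨t, ht, hp⟩
    exact ⟨_, hp, t, ht.1, ht.2, rfl⟩

section Horizontal

variable {n : ℕ} {i j : ℤ}

lemma sin_eq_of_enter_box {t δ : ℝ} (hi : 0 ≤ i)
    (hside : OnHorizontalSide n i j (cos t, sin t)) (hδ : 0 < δ)
    (hbox : ∀ s ∈ Ioo t (t + δ), (cos s, sin s) ∈ boxInt n i j) : sin t = j / n := by
  refine hside.1.resolve_right fun htop => ?_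
  have hin : (0 : ℝ) ≤ i / n := div_nonneg (Int.cast_nonneg hi) n.cast_nonneg
  have hmono : StrictMonoOn sin (Icc t (t + δ / 2)) := by
    refine strictMonoOn_of_deriv_pos (convex_Icc _ _) continuousOn_sin fun x hx => ?_
    rw [interior_Icc] at hx
    rw [Real.deriv_sin]
    exact hin.trans_lt (hbox x ⟨hx.1, by linarith [hx.2]⟩).1
  have hrise := hmono ⟨le_rfl, by linarith⟩ ⟨by linarith, le_rfl⟩ (by linarith)
  have hbelow := (hbox (t + δ / 2) ⟨by linarith, by linarith⟩).2.2.2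
  simp only at htop hbelow
  linarith

lemma IsHorizontal.fst_eq {i' : ℤ} (hn : 0 < n) (hi : 0 ≤ i) (hi' : 0 ≤ i')
    (h : IsHorizontal n i j) (h' : IsHorizontal n i' j) : i = i' := by
  obtain ⟨t, δ, hδ, hside, hbox⟩ := h
  obtain ⟨t', δ', hδ', hside', hbox'⟩ := h'
  have hsin : sin t = sin t' := by
    rw [sin_eq_of_enter_box hi hside hδ hbox, sin_eq_of_enter_box hi' hside' hδ' hbox']
  have hcos : cos t = cos t' := by
    have hc : 0 ≤ cos t := (div_nonneg (Int.cast_nonneg hi) n.cast_nonneg).trans hside.2.1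
    have hc' : 0 ≤ cos t' := (div_nonneg (Int.cast_nonneg hi') n.cast_nonneg).trans hside'.2.1
    rw [← sq_eq_sq₀ hc hc', cos_sq', cos_sq', hsin]
  -- The entry points coincide on the circle, so shortly after them the circle lies in both boxes.
  set ε := min δ δ' / 2
  have hε0 : 0 < ε := half_pos (lt_min hδ hδ')
  have hεδ : ε < δ := (half_lt_self (lt_min hδ hδ')).trans_le (min_le_left _ _)
  have hεδ' : ε < δ' := (half_lt_self (lt_min hδ hδ')).trans_le (min_le_right _ _)
  have hp := hbox (t + ε) ⟨by linarith, by linarith⟩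
  have hp' := hbox' (t' + ε) ⟨by linarith, by linarith⟩
  rw [cos_add, ← hcos, ← hsin, ← cos_add] at hp'
  exact (floor_mul_eq_of_mem_Ioo hn ⟨hp.1, hp.2.1⟩).symm.trans
    (floor_mul_eq_of_mem_Ioo hn ⟨hp'.1, hp'.2.1⟩)

end Horizontal

section Arc

variable {n : ℕ} {α β : ℝ} {i j : ℤ}

lemma fst_nonneg_of_mem_approx_arc (h0 : -(π / 2) ≤ α) (hβ : β ≤ π / 2)
    (h : (i, j) ∈ approx n (arc α β)) : 0 ≤ i := by
  obtain ⟨t, ht, hbox⟩ := mem_approx_arc.1 h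
  have hcos : 0 < cos t := cos_pos_of_mem_Ioo ⟨by linarith [ht.1], by linarith [ht.2]⟩
  have hpos : (0 : ℝ) < i + 1 := by
    by_contra! hle
    linarith [hbox.2.1, div_nonpos_of_nonpos_of_nonneg hle n.cast_nonneg]
  have : (0 : ℤ) < i + 1 := by exact_mod_cast hpos
  omega

lemma snd_bounds_of_mem_approx_arc (hn : 0 < n) (h0 : -(π / 2) ≤ α) (hβ : β ≤ π / 2)
    (h : (i, j) ∈ approx n (arc α β)) : sin α * n < j + 1 ∧ j < sin β * n := by
  obtain ⟨t, ht, hbox⟩ := mem_approx_arc.1 h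
  have hn' : (0 : ℝ) < n := Nat.cast_pos.2 hn
  have hα : sin α < sin t := sin_lt_sin_of_lt_of_le_pi_div_two h0 (by linarith [ht.2]) ht.1
  have hβ' : sin t < sin β := sin_lt_sin_of_lt_of_le_pi_div_two (by linarith [ht.1]) hβ ht.2
  have htop : sin t * n < j + 1 := (lt_div_iff₀ hn').1 hbox.2.2.2
  have hbot : j < sin t * n := (div_lt_iff₀ hn').1 hbox.2.2.1
  constructor <;> nlinarith

lemma exists_isHorizontal_mem_approx_arc (hn : 0 < n) (h0 : -(π / 2) ≤ α) (hαβ : α ≤ β)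
    (hβ : β ≤ π / 2) (hα : sin α * n ≤ j) (hj : j < sin β * n) :
    ∃ i : ℤ, (i, j) ∈ approx n (arc α β) ∧ IsHorizontal n i j := by
  have hn' : (0 : ℝ) < n := Nat.cast_pos.2 hn
  have hα' : sin α ≤ j / n := (le_div_iff₀ hn').2 hα
  have hβ' : j / n < sin β := (div_lt_iff₀ hn').2 hj
  have hj₁ : (j / n : ℝ) ∈ Icc (-1) 1 :=
    ⟨(neg_one_le_sin α).trans hα', hβ'.le.trans (sin_le_one β)⟩
  set t₀ := arcsin (j / n)
  have ht₀α : α ≤ t₀ := (le_arcsin_iff_sin_le ⟨h0, hαβ.trans hβ⟩ hj₁).2 hα'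
  have ht₀β : t₀ < β := (arcsin_lt_iff_lt_sin hj₁ ⟨h0.trans hαβ, hβ⟩).2 hβ'
  have hsin : ∀ᶠ s in 𝓝[>] t₀, sin s ∈ Ioo (j / n : ℝ) ((j + 1) / n) := by
    refine eventually_mem_Ioo_of_strictMonoOn continuous_sin.continuousAt (ht₀β.trans_le hβ)
      (strictMonoOn_sin.mono fun s hs => ⟨h0.trans (ht₀α.trans hs.1), hs.2.le⟩)
      (sin_arcsin hj₁.1 hj₁.2).ge ?_
    rw [sin_arcsin hj₁.1 hj₁.2]
    exact div_lt_div_of_pos_right (lt_add_one _) hn'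
  obtain ⟨i, hcos₀, hcos⟩ := exists_cell_cos hn (by linarith [pi_pos, h0.trans ht₀α])
    (by linarith [pi_pos, ht₀β.trans_le hβ])
  have hbox : ∀ᶠ s in 𝓝[>] t₀, (cos s, sin s) ∈ boxInt n i j := by
    filter_upwards [hcos, hsin] with s hc hs using ⟨hc.1, hc.2, hs.1, hs.2⟩
  obtain ⟨t, ht, htbox⟩ := (Eventually.and (Ioo_mem_nhdsGT ht₀β) hbox).exists
  refine ⟨i, mem_approx_arc.2 ⟨t, ⟨ht₀α.trans_lt ht.1, ht.2⟩, htbox⟩,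
    isHorizontal_of_eventually ⟨Or.inl (sin_arcsin hj₁.1 hj₁.2), hcos₀⟩ hbox⟩

end Arc

lemma abs_ncard_sub_le_two {T : Set ℤ} {x y : ℝ} (hxy : x ≤ y)
    (hlow : ∀ j : ℤ, x ≤ j → j < y → j ∈ T) (hup : ∀ j ∈ T, x < j + 1 ∧ j < y) :
    |(T.ncard : ℝ) - (y - x)| ≤ 2 := by
  have hA : (Finset.Ico ⌈x⌉ ⌈y⌉ : Set ℤ) ⊆ T := fun j hj => by
    rw [Finset.coe_Ico, mem_Ico] at hj
    exact hlow j (Int.ceil_le.1 hj.1) (Int.lt_ceil.1 hj.2)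
  have hB : T ⊆ (Finset.Ico (⌈x⌉ - 1) ⌈y⌉ : Set ℤ) := fun j hj => by
    obtain ⟨hx, hy⟩ := hup j hj
    have : ⌈x⌉ ≤ j + 1 := Int.ceil_le.2 (by push_cast; exact hx.le)
    rw [Finset.coe_Ico, mem_Ico]
    exact ⟨by omega, Int.lt_ceil.2 hy⟩
  have hle := Set.ncard_le_ncard hA ((Finset.finite_toSet _).subset hB)
  have hge := Set.ncard_le_ncard hB (Finset.finite_toSet _)
  rw [Set.ncard_coe_finset, Int.card_Ico] at hle hge
  have hceil : ⌈x⌉ ≤ ⌈y⌉ := Int.ceil_mono hxy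
  have hlo : ((⌈y⌉ - ⌈x⌉ : ℤ) : ℝ) ≤ T.ncard := by
    exact_mod_cast (by omega : ⌈y⌉ - ⌈x⌉ ≤ (T.ncard : ℤ))
  have hhi : (T.ncard : ℝ) ≤ ((⌈y⌉ - ⌈x⌉ + 1 : ℤ) : ℝ) := by
    exact_mod_cast (by omega : (T.ncard : ℤ) ≤ ⌈y⌉ - ⌈x⌉ + 1)
  push_cast at hlo hhi
  rw [abs_le]
  constructor <;>
    linarith [Int.le_ceil x, Int.le_ceil y, Int.ceil_lt_add_one x, Int.ceil_lt_add_one y]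

theorem count_horizontal_boxes (α β : ℝ) (h0 : -(Real.pi / 2) ≤ α) (hαβ : α ≤ β)
    (hβ : β ≤ Real.pi / 2) :
    ∃ K : ℝ, ∀ n : ℕ, 1 ≤ n →
      |({ij ∈ approx n (arc α β) | IsHorizontal n ij.1 ij.2}.ncard : ℝ)
        - (Real.sin β - Real.sin α) * n| ≤ K := by
  refine ⟨2, fun n hn => ?_⟩
  set S := {ij ∈ approx n (arc α β) | IsHorizontal n ij.1 ij.2}
  have hinj : InjOn Prod.snd S := fun p hp q hq hpq =>
    Prod.ext (IsHorizontal.fst_eq hn (fst_nonneg_of_mem_approx_arc h0 hβ hp.1)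
      (fst_nonneg_of_mem_approx_arc h0 hβ hq.1) hp.2 (hpq ▸ hq.2)) hpq
  rw [← hinj.ncard_image, sub_mul]
  refine abs_ncard_sub_le_two (by gcongr; exact sin_le_sin_of_le_of_le_pi_div_two h0 hβ hαβ)
    (fun j hα hj => ?_) ?_
  · obtain ⟨i, hi⟩ := exists_isHorizontal_mem_approx_arc hn h0 hαβ hβ hα hj
    exact ⟨(i, j), hi, rfl⟩
  · rintro _ ⟨⟨i, j⟩, hij, rfl⟩
    exact snd_bounds_of_mem_approx_arc hn h0 hβ hij.1
end

section
/- Fix ε > 0 and real numbers α, β with 0 ≤ α ≤ β ≤ π/2. Then there is a constant K (depending on ε, α, β) such that for every integer n ≥ 1, | |C_{α,β}(n)| − ((sin β − cos β) − (sin α − cos α))·n | ≤ K·n^ε. -/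
open Real Set Filter

/-!
After scaling by `n`, a box `(i, j)` meets the arc iff `n (cos t, sin t)` lies in the open unit
square at `(i, j)` for some `t ∈ (α, β)`. In the first quadrant the first coordinate decreases and
the second increases along the arc, so a box met by the arc is determined by its diagonal index
`j - i`, which lies within distance `1` of the interval `(A, B)` with `A = n (sin α - cos α)` and
`B = n (sin β - cos β)`. Conversely, by the intermediate value theorem every integer `m ∈ (A, B)`
is the diagonal index of such a box, unless the point of the arc with `n (sin t - cos t) = m` is a
lattice point. So the count is `B - A` up to `3` plus the number of lattice points on the circle of
radius `n`, which is at most `2 + d(n) d(n²) = O(n^ε)`: a primitive solution of `a² + b² = N`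
gives the square root `a / b` of `-1` modulo `N`, and there are at most `d(N)` of those, by the
Chinese remainder theorem and because `ZMod (p ^ k)` is a local ring.
-/

theorem IsLocalRing.eq_or_eq_neg_of_sq_eq_sq {R : Type*} [CommRing R] [IsLocalRing R]
    (h2 : IsUnit (2 : R)) {x y : R} (hx : IsUnit x) (h : x ^ 2 = y ^ 2) : x = y ∨ x = -y := by
  have hprod : (x - y) * (x + y) = 0 := by linear_combination h
  have hsum : IsUnit ((x - y) + (x + y)) := by
    rw [show (x - y) + (x + y) = 2 * x by ring]; exact h2.mul hx
  rcases IsLocalRing.isUnit_or_isUnit_of_isUnit_add hsum with hu | hu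
  · exact .inr (eq_neg_of_add_eq_zero_left (hu.mul_right_eq_zero.mp hprod))
  · exact .inl (sub_eq_zero.mp (hu.mul_left_eq_zero.mp hprod))

theorem IsLocalRing.ncard_sq_eq_le_two {R : Type*} [CommRing R] [IsLocalRing R]
    (h2 : IsUnit (2 : R)) {c : R} (hc : IsUnit c) : {x : R | x ^ 2 = c}.ncard ≤ 2 := by
  rcases Set.eq_empty_or_nonempty {x : R | x ^ 2 = c} with he | ⟨z, hz⟩
  · simp [he]
  have hsub : {x : R | x ^ 2 = c} ⊆ {z, -z} := fun x hx =>
    eq_or_eq_neg_of_sq_eq_sq h2 ((isUnit_pow_iff two_ne_zero).mp (hx.symm ▸ hc))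
      (hx.trans hz.symm)
  exact (Set.ncard_le_ncard hsub).trans (Set.ncard_insert_le _ _ |>.trans (by simp))

theorem ZMod.ncard_sq_eq_neg_one_prime_pow_le_two {p k : ℕ} (hp : p.Prime) (hk : 0 < k) :
    {x : ZMod (p ^ k) | x ^ 2 = -1}.ncard ≤ 2 := by
  have : Fact p.Prime := ⟨hp⟩
  have : Fact (1 < p ^ k) := ⟨Nat.one_lt_pow hk.ne' hp.one_lt⟩
  rcases hp.eq_two_or_odd' with rfl | hodd
  · obtain rfl | hk2 := (Nat.one_le_iff_ne_zero.mpr hk.ne').eq_or_lt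
    · exact (Set.ncard_le_card _).trans (by simp)
    · suffices {x : ZMod (2 ^ k) | x ^ 2 = -1} = ∅ by simp [this]
      refine Set.eq_empty_of_forall_notMem fun x (hx : x ^ 2 = -1) => ?_
      have hmod4 : ∀ y : ZMod 4, y ^ 2 ≠ -1 := by decide
      apply hmod4 (ZMod.castHom (pow_dvd_pow 2 hk2 : 2 ^ 2 ∣ 2 ^ k) (ZMod 4) x)
      rw [← map_pow, hx, map_neg, map_one]
  · have : IsLocalRing (ZMod (p ^ k)) :=
      IsLocalRing.of_surjective (PadicInt.toZModPow k) (ZMod.ringHom_surjective _)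
    have h2 : IsUnit (2 : ZMod (p ^ k)) := by
      rw [show (2 : ZMod (p ^ k)) = ((2 : ℕ) : ZMod (p ^ k)) by norm_cast, ZMod.isUnit_iff_coprime]
      exact (Nat.coprime_two_left.mpr hodd).pow_right k
    exact IsLocalRing.ncard_sq_eq_le_two h2 isUnit_one.neg

theorem RingEquiv.ncard_sq_eq_neg_one {R S : Type*} [Ring R] [Ring S] (e : R ≃+* S) :
    {x : R | x ^ 2 = -1}.ncard = {y : S | y ^ 2 = -1}.ncard := by
  rw [← Set.ncard_image_of_injective _ e.injective]
  congr 1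
  ext y
  refine ⟨?_, fun hy => ⟨e.symm y, ?_, e.apply_symm_apply y⟩⟩
  · rintro ⟨x, hx, rfl⟩
    simp [← map_pow, hx.out]
  · simp [← map_pow, hy.out]

theorem ZMod.ncard_sq_eq_neg_one_mul {m n : ℕ} (h : m.Coprime n) :
    {x : ZMod (m * n) | x ^ 2 = -1}.ncard =
      {x : ZMod m | x ^ 2 = -1}.ncard * {x : ZMod n | x ^ 2 = -1}.ncard := by
  rw [(ZMod.chineseRemainder h).ncard_sq_eq_neg_one, ← Set.ncard_prod]
  congr 1
  ext ⟨a, b⟩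
  simp [Prod.ext_iff]

theorem ZMod.ncard_sq_eq_neg_one_le_card_divisors (r : ℕ) :
    {x : ZMod r | x ^ 2 = -1}.ncard ≤ r.divisors.card := by
  induction r using Nat.recOnPosPrimePosCoprime with
  | prime_pow p k hp hk =>
    rw [Nat.divisors_prime_pow hp, Finset.card_map, Finset.card_range]
    exact (ncard_sq_eq_neg_one_prime_pow_le_two hp hk).trans (by omega)
  | zero =>
    have : {x : ℤ | x ^ 2 = -1} = ∅ :=
      Set.eq_empty_of_forall_notMem fun x (hx : x ^ 2 = -1) => by nlinarith
    exact (congrArg Set.ncard this).le.trans (by simp)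
  | one => exact (Set.ncard_le_one_of_subsingleton _).trans (by simp)
  | coprime a b _ _ hab iha ihb =>
    rw [ncard_sq_eq_neg_one_mul hab, Nat.Coprime.card_divisors_mul hab]
    exact Nat.mul_le_mul iha ihb

def Nat.sqAddSqReps (N : ℕ) : Set (ℕ × ℕ) := {p | p.1 ^ 2 + p.2 ^ 2 = N}

def Nat.coprimeSqAddSqReps (N : ℕ) : Set (ℕ × ℕ) :=
  {p | 0 < p.1 ∧ 0 < p.2 ∧ p.1.Coprime p.2 ∧ p.1 ^ 2 + p.2 ^ 2 = N}

theorem Nat.finite_sqAddSqReps (N : ℕ) : (Nat.sqAddSqReps N).Finite :=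
  ((Set.finite_Iic N).prod (Set.finite_Iic N)).subset fun p (hp : _ = N) =>
    ⟨(Nat.le_self_pow two_ne_zero p.1).trans (by omega),
      (Nat.le_self_pow two_ne_zero p.2).trans (by omega)⟩

theorem Nat.finite_coprimeSqAddSqReps (N : ℕ) : (Nat.coprimeSqAddSqReps N).Finite :=
  (Nat.finite_sqAddSqReps N).subset fun _ hp => hp.2.2.2

theorem Nat.mul_lt_of_sq_add_sq_eq {a b c d N : ℕ} (hab : a ^ 2 + b ^ 2 = N)
    (hcd : c ^ 2 + d ^ 2 = N) (hb : 0 < b) (hc : 0 < c) : a * d < N := by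
  rw [← Nat.mul_self_lt_mul_self_iff, show a * d * (a * d) = (a * a) * (d * d) by ring]
  exact Nat.mul_lt_mul'' (by nlinarith) (by nlinarith)

theorem Nat.eq_and_eq_of_mul_eq_mul_of_coprime {a b c d : ℕ} (hab : a.Coprime b)
    (hcd : c.Coprime d) (h : a * d = c * b) : a = c ∧ b = d :=
  ⟨Nat.dvd_antisymm (hab.dvd_of_dvd_mul_right (h ▸ dvd_mul_right a d))
      (hcd.dvd_of_dvd_mul_right (h ▸ dvd_mul_right c b)),
    Nat.dvd_antisymm (hab.symm.dvd_of_dvd_mul_left (h ▸ dvd_mul_left b c))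
      (hcd.symm.dvd_of_dvd_mul_left (h ▸ dvd_mul_left d a))⟩

theorem Nat.ncard_coprimeSqAddSqReps_le {N : ℕ} (hN : N ≠ 0) :
    (Nat.coprimeSqAddSqReps N).ncard ≤ {x : ZMod N | x ^ 2 = -1}.ncard := by
  have : NeZero N := ⟨hN⟩
  have hinv : ∀ {a b : ℕ}, a.Coprime b → a ^ 2 + b ^ 2 = N →
      (b : ZMod N) * (b : ZMod N)⁻¹ = 1 := by
    intro a b hab habN
    refine ZMod.mul_inv_of_unit _ ((ZMod.isUnit_iff_coprime b N).mpr ?_)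
    rw [← habN, sq b, Nat.coprime_add_mul_right_right]
    exact hab.symm.pow_right 2
  refine Set.ncard_le_ncard_of_injOn (fun p => (p.1 : ZMod N) * (p.2 : ZMod N)⁻¹) ?_ ?_
  · rintro ⟨a, b⟩ ⟨-, -, hab, habN⟩
    have hzero : (a : ZMod N) ^ 2 + (b : ZMod N) ^ 2 = 0 := by
      exact_mod_cast (ZMod.natCast_eq_zero_iff _ N).mpr habN.symm.dvd
    show ((a : ZMod N) * (b : ZMod N)⁻¹) ^ 2 = -1
    linear_combination ((b : ZMod N)⁻¹) ^ 2 * hzero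
      - (1 + (b : ZMod N) * (b : ZMod N)⁻¹) * hinv hab habN
  · rintro ⟨a, b⟩ ⟨ha, hb, hab, habN⟩ ⟨c, d⟩ ⟨hc, hd, hcd, hcdN⟩
      (h : (a : ZMod N) * (b : ZMod N)⁻¹ = c * (d : ZMod N)⁻¹)
    have hmod : ((a * d : ℕ) : ZMod N) = ((c * b : ℕ) : ZMod N) := by
      push_cast
      linear_combination ((b : ZMod N) * d) * h - ((a : ZMod N) * d) * hinv hab habN
        + ((c : ZMod N) * b) * hinv hcd hcdN
    have := ((ZMod.natCast_eq_natCast_iff _ _ _).mp hmod).eq_of_lt_of_lt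
      (Nat.mul_lt_of_sq_add_sq_eq habN hcdN hb hc) (Nat.mul_lt_of_sq_add_sq_eq hcdN habN hd ha)
    obtain ⟨rfl, rfl⟩ := Nat.eq_and_eq_of_mul_eq_mul_of_coprime hab hcd this
    rfl

theorem Nat.sqAddSqReps_sq_subset (n : ℕ) :
    Nat.sqAddSqReps (n ^ 2) ⊆ {(0, n), (n, 0)} ∪
      ⋃ d ∈ n.divisors, (fun q : ℕ × ℕ => (d * q.1, d * q.2)) ''
        Nat.coprimeSqAddSqReps ((n / d) ^ 2) := by
  rintro ⟨a, b⟩ (h : a ^ 2 + b ^ 2 = n ^ 2)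
  rcases Nat.eq_zero_or_pos a with rfl | ha
  · left; simp_all
  rcases Nat.eq_zero_or_pos b with rfl | hb
  · left; simp_all
  right
  obtain ⟨g, hg, a', b', n', rfl, rfl, rfl, hcop⟩ :
      ∃ g, 0 < g ∧ ∃ a' b' n', a = g * a' ∧ b = g * b' ∧ n = g * n' ∧ a'.Coprime b' := by
    have hg : 0 < a.gcd b := Nat.gcd_pos_of_pos_left b ha
    have hgn : a.gcd b ∣ n := (Nat.pow_dvd_pow_iff two_ne_zero).mp (h ▸ dvd_add
      (pow_dvd_pow_of_dvd (a.gcd_dvd_left b) 2) (pow_dvd_pow_of_dvd (a.gcd_dvd_right b) 2))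
    exact ⟨_, hg, _, _, _, (Nat.mul_div_cancel' (a.gcd_dvd_left b)).symm,
      (Nat.mul_div_cancel' (a.gcd_dvd_right b)).symm, (Nat.mul_div_cancel' hgn).symm,
      Nat.coprime_div_gcd_div_gcd hg⟩
  have hn' : 0 < n' := by
    rcases Nat.eq_zero_or_pos n' with rfl | h'
    · nlinarith
    · exact h'
  refine Set.mem_biUnion (Nat.mem_divisors.mpr ⟨dvd_mul_right g n', by positivity⟩)
    ⟨(a', b'), ⟨Nat.pos_of_mul_pos_left ha, Nat.pos_of_mul_pos_left hb, hcop, ?_⟩, rfl⟩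
  rw [Nat.mul_div_cancel_left _ hg]
  exact Nat.eq_of_mul_eq_mul_left (pow_pos hg 2) (by linear_combination h)

theorem Nat.ncard_sqAddSqReps_sq_le {n : ℕ} (hn : n ≠ 0) :
    (Nat.sqAddSqReps (n ^ 2)).ncard ≤ 2 + n.divisors.card * (n ^ 2).divisors.card := by
  have hprim : ∀ d ∈ n.divisors, ((fun q : ℕ × ℕ => (d * q.1, d * q.2)) ''
      Nat.coprimeSqAddSqReps ((n / d) ^ 2)).ncard ≤ (n ^ 2).divisors.card := by
    intro d hd
    obtain ⟨hdn, -⟩ := Nat.mem_divisors.mp hd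
    have hd0 : d ≠ 0 := ne_zero_of_dvd_ne_zero hn hdn
    have hnd : (n / d) ^ 2 ≠ 0 :=
      pow_ne_zero 2 (Nat.div_ne_zero_iff_of_dvd hdn |>.mpr ⟨hn, hd0⟩)
    calc _ ≤ _ := Set.ncard_image_le (Nat.finite_coprimeSqAddSqReps _)
      _ ≤ _ := Nat.ncard_coprimeSqAddSqReps_le hnd
      _ ≤ _ := ZMod.ncard_sq_eq_neg_one_le_card_divisors _
      _ ≤ _ := Finset.card_le_card (Nat.divisors_subset_of_dvd (pow_ne_zero 2 hn)
        (pow_dvd_pow_of_dvd (Nat.div_dvd_of_dvd hdn) 2))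
  calc _ ≤ _ := Set.ncard_le_ncard (Nat.sqAddSqReps_sq_subset n)
        ((Set.toFinite _).union ((Finset.finite_toSet _).biUnion fun d _ =>
          (Nat.finite_coprimeSqAddSqReps _).image _))
    _ ≤ _ := Set.ncard_union_le _ _
    _ ≤ 2 + ∑ d ∈ n.divisors, (n ^ 2).divisors.card := by
      gcongr
      · exact (Set.ncard_insert_le _ _).trans (by simp)
      · exact (Finset.set_ncard_biUnion_le _ _).trans (Finset.sum_le_sum hprim)
    _ = _ := by rw [Finset.sum_const, smul_eq_mul]

theorem Real.natCast_add_one_le_rpow_pow {x δ : ℝ} (hx : 0 ≤ x) (h : 2 ≤ x ^ δ) (e : ℕ) :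
    (e + 1 : ℝ) ≤ (x ^ e) ^ δ := by
  rw [← Real.rpow_pow_comm hx]
  calc (e + 1 : ℝ) ≤ 2 ^ e := by exact_mod_cast Nat.lt_two_pow_self
    _ ≤ (x ^ δ) ^ e := pow_le_pow_left₀ zero_le_two h e

theorem Real.natCast_add_one_le_mul_rpow_pow {x δ : ℝ} (hx : 2 ≤ x) (hδ : 0 < δ) (e : ℕ) :
    (e + 1 : ℝ) ≤ (1 + (2 ^ δ - 1)⁻¹) * (x ^ e) ^ δ := by
  set c := (2 : ℝ) ^ δ - 1
  have hc : 0 < c := sub_pos.mpr (Real.one_lt_rpow one_lt_two hδ)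
  have hbernoulli : 1 + e * c ≤ (x ^ e) ^ δ := by
    rw [← Real.rpow_pow_comm (by linarith)]
    calc 1 + e * c ≤ (1 + c) ^ e := one_add_mul_le_pow (by linarith) e
      _ ≤ (x ^ δ) ^ e := pow_le_pow_left₀ (by linarith) (by
          simpa [c] using Real.rpow_le_rpow zero_le_two hx hδ.le) e
  calc (e + 1 : ℝ) ≤ (1 + c⁻¹) * (1 + e * c) := by
        field_simp
        nlinarith [mul_nonneg (Nat.cast_nonneg (α := ℝ) e) (sq_nonneg c)]
    _ ≤ _ := by gcongr

theorem Nat.exists_card_divisors_le_rpow {δ : ℝ} (hδ : 0 < δ) :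
    ∃ K : ℝ, ∀ n : ℕ, (n.divisors.card : ℝ) ≤ K * (n : ℝ) ^ δ := by
  set C : ℝ := 1 + (2 ^ δ - 1)⁻¹
  have hC : 1 ≤ C := le_add_of_nonneg_right (inv_nonneg.mpr (sub_nonneg.mpr
    (Real.one_le_rpow one_le_two hδ.le)))
  set T : ℕ := ⌈(2 : ℝ) ^ δ⁻¹⌉₊
  refine ⟨C ^ T, fun n => ?_⟩
  rcases eq_or_ne n 0 with rfl | hn
  · simp [Real.zero_rpow hδ.ne']
  have hfactor : ∀ p ∈ n.primeFactors, ((n.factorization p + 1 : ℕ) : ℝ) ≤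
      (if p < T then C else 1) * ((p : ℝ) ^ n.factorization p) ^ δ := by
    intro p hp
    have hp2 : (2 : ℝ) ≤ p := by exact_mod_cast (Nat.prime_of_mem_primeFactors hp).two_le
    push_cast
    split_ifs with hpT
    · exact Real.natCast_add_one_le_mul_rpow_pow hp2 hδ _
    · rw [one_mul]
      refine Real.natCast_add_one_le_rpow_pow (by linarith) ?_ _
      calc (2 : ℝ) = ((2 : ℝ) ^ δ⁻¹) ^ δ := by
            rw [← Real.rpow_mul zero_le_two, inv_mul_cancel₀ hδ.ne', Real.rpow_one]
        _ ≤ (p : ℝ) ^ δ := Real.rpow_le_rpow (by positivity)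
          ((Nat.le_ceil _).trans (by exact_mod_cast not_lt.mp hpT)) hδ.le
  have hsmall : ∏ p ∈ n.primeFactors, (if p < T then C else 1) ≤ C ^ T := by
    rw [Finset.prod_ite, Finset.prod_const, Finset.prod_const_one, mul_one]
    refine pow_le_pow_right₀ hC
      ((Finset.card_le_card fun p hp => ?_).trans (Finset.card_range T).le)
    exact Finset.mem_range.mpr (Finset.mem_filter.mp hp).2
  have hn_eq : ∏ p ∈ n.primeFactors, ((p : ℝ) ^ n.factorization p) ^ δ = (n : ℝ) ^ δ := by
    rw [Real.finsetProd_rpow _ _ (fun p _ => by positivity)]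
    exact_mod_cast congrArg (fun m : ℕ => (m : ℝ) ^ δ)
      (Nat.prod_primeFactors_pow_factorization hn).symm
  calc (n.divisors.card : ℝ) = ∏ p ∈ n.primeFactors, ((n.factorization p + 1 : ℕ) : ℝ) := by
        rw [Nat.card_divisors hn]; push_cast; rfl
    _ ≤ ∏ p ∈ n.primeFactors, (if p < T then C else 1) * ((p : ℝ) ^ n.factorization p) ^ δ :=
        Finset.prod_le_prod (fun p _ => by positivity) hfactor
    _ ≤ C ^ T * (n : ℝ) ^ δ := by
        rw [Finset.prod_mul_distrib, hn_eq]
        gcongr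

theorem Int.card_Ioo_floor_ceil (x y : ℝ) :
    ((Finset.Ioo ⌊x⌋ ⌈y⌉).card : ℝ) = max ((⌈y⌉ : ℝ) - ⌊x⌋ - 1) 0 := by
  have : ((Finset.Ioo ⌊x⌋ ⌈y⌉).card : ℤ) = max (⌈y⌉ - ⌊x⌋ - 1) 0 := by
    rw [Int.card_Ioo, Int.toNat_eq_max]
  exact_mod_cast this

theorem Int.card_Ioo_floor_ceil_le {x y : ℝ} (h : x ≤ y) :
    ((Finset.Ioo ⌊x⌋ ⌈y⌉).card : ℝ) ≤ y - x + 1 := by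
  rw [Int.card_Ioo_floor_ceil]
  exact max_le (by linarith [Int.ceil_lt_add_one y, Int.sub_one_lt_floor x]) (by linarith)

theorem Int.sub_sub_one_le_card_Ioo_floor_ceil (x y : ℝ) :
    y - x - 1 ≤ ((Finset.Ioo ⌊x⌋ ⌈y⌉).card : ℝ) := by
  rw [Int.card_Ioo_floor_ceil]
  exact le_max_of_le_left (by linarith [Int.le_ceil y, Int.floor_le x])

theorem Int.mem_Ioo_floor_ceil {x y : ℝ} {m : ℤ} :
    m ∈ Finset.Ioo ⌊x⌋ ⌈y⌉ ↔ x < m ∧ (m : ℝ) < y := by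
  rw [Finset.mem_Ioo, Int.floor_lt, Int.lt_ceil]

theorem Real.cos_le_cos_and_sin_le_sin {s t : ℝ} (hs : 0 ≤ s) (hst : s ≤ t) (ht : t ≤ π / 2) :
    cos t ≤ cos s ∧ sin s ≤ sin t :=
  ⟨Real.cos_le_cos_of_nonneg_of_le_pi hs (by linarith [Real.pi_pos]) hst,
    Real.sin_le_sin_of_le_of_le_pi_div_two (by linarith [Real.pi_pos]) ht hst⟩

section Arc

variable {n : ℕ} {α β : ℝ}

theorem mem_approx_arc_iff (hn : 0 < n) {i j : ℤ} :
    (i, j) ∈ approx n (arc α β) ↔ ∃ t ∈ Ioo α β,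
      (i : ℝ) < cos t * n ∧ cos t * n < i + 1 ∧ (j : ℝ) < sin t * n ∧ sin t * n < j + 1 := by
  have hn' : (0 : ℝ) < n := by exact_mod_cast hn
  simp only [approx, boxInt, arc, Set.mem_ofPred_eq, div_lt_iff₀ hn', lt_div_iff₀ hn']
  constructor
  · rintro ⟨_, hbox, t, hαt, htβ, rfl⟩
    exact ⟨t, ⟨hαt, htβ⟩, hbox⟩
  · rintro ⟨t, ⟨hαt, htβ⟩, hbox⟩
    exact ⟨_, hbox, t, hαt, htβ, rfl⟩

theorem sub_mem_Ioo_of_mem_approx_arc (hn : 0 < n) (h0 : 0 ≤ α) (hβ : β ≤ π / 2) {i j : ℤ}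
    (hij : (i, j) ∈ approx n (arc α β)) :
    (sin α - cos α) * n - 1 < ((j - i : ℤ) : ℝ) ∧
      ((j - i : ℤ) : ℝ) < (sin β - cos β) * n + 1 := by
  obtain ⟨t, ⟨hαt, htβ⟩, hi, hi', hj, hj'⟩ := (mem_approx_arc_iff hn).mp hij
  obtain ⟨hcα, hsα⟩ := Real.cos_le_cos_and_sin_le_sin h0 hαt.le (htβ.le.trans hβ)
  obtain ⟨hcβ, hsβ⟩ := Real.cos_le_cos_and_sin_le_sin (h0.trans hαt.le) htβ.le hβ
  have hn' : (0 : ℝ) ≤ n := n.cast_nonneg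
  push_cast
  constructor <;> nlinarith

theorem le_and_le_of_lt_cos_mul_of_sin_mul_lt {i₁ j₁ i₂ j₂ : ℤ} {t₁ t₂ : ℝ} (h0 : 0 ≤ t₁)
    (h12 : t₁ ≤ t₂) (h2 : t₂ ≤ π / 2) (hi₁ : cos t₁ * n < i₁ + 1) (hi₂ : (i₂ : ℝ) < cos t₂ * n)
    (hj₁ : (j₁ : ℝ) < sin t₁ * n) (hj₂ : sin t₂ * n < j₂ + 1) : i₂ ≤ i₁ ∧ j₁ ≤ j₂ := by
  obtain ⟨hc, hs⟩ := Real.cos_le_cos_and_sin_le_sin h0 h12 h2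
  have hn : (0 : ℝ) ≤ n := n.cast_nonneg
  have hi : (i₂ : ℝ) < i₁ + 1 := by nlinarith
  have hj : (j₁ : ℝ) < j₂ + 1 := by nlinarith
  constructor
  · exact Int.lt_add_one_iff.mp (by exact_mod_cast hi)
  · exact Int.lt_add_one_iff.mp (by exact_mod_cast hj)

theorem injOn_sub_approx_arc (hn : 0 < n) (h0 : 0 ≤ α) (hβ : β ≤ π / 2) :
    InjOn (fun ij : ℤ × ℤ => ij.2 - ij.1) (approx n (arc α β)) := by
  rintro ⟨i₁, j₁⟩ h₁ ⟨i₂, j₂⟩ h₂ (h : j₁ - i₁ = j₂ - i₂)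
  obtain ⟨t₁, ht₁, hi₁, hi₁', hj₁, hj₁'⟩ := (mem_approx_arc_iff hn).mp h₁
  obtain ⟨t₂, ht₂, hi₂, hi₂', hj₂, hj₂'⟩ := (mem_approx_arc_iff hn).mp h₂
  wlog h12 : t₁ ≤ t₂ generalizing i₁ j₁ i₂ j₂ t₁ t₂
  · exact (this i₂ j₂ h₂ i₁ j₁ h₁ h.symm t₂ ht₂ hi₂ hi₂' hj₂ hj₂' t₁ ht₁ hi₁ hi₁' hj₁ hj₁'
      (le_of_not_ge h12)).symm
  obtain ⟨hi, hj⟩ := le_and_le_of_lt_cos_mul_of_sin_mul_lt (h0.trans ht₁.1.le) h12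
    (ht₂.2.le.trans hβ) hi₁' hi₂ hj₁ hj₂'
  rw [Prod.mk.injEq]
  omega

theorem exists_mem_approx_arc_or_mem_sqAddSqReps (hn : 0 < n) (h0 : 0 ≤ α) (hαβ : α ≤ β)
    (hβ : β ≤ π / 2) {m : ℤ} (hm : (sin α - cos α) * n < m ∧ (m : ℝ) < (sin β - cos β) * n) :
    (∃ ij ∈ approx n (arc α β), ij.2 - ij.1 = m) ∨
      ∃ p ∈ Nat.sqAddSqReps (n ^ 2), (p.2 : ℤ) - p.1 = m := by
  obtain ⟨t, ⟨hαt, htβ⟩, ht⟩ :=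
    intermediate_value_Ioo (f := fun t => (sin t - cos t) * n) hαβ (by fun_prop) hm
  have hcos : 0 ≤ cos t * n :=
    mul_nonneg (Real.cos_nonneg_of_mem_Icc ⟨by linarith [Real.pi_pos], by linarith⟩)
      n.cast_nonneg
  have hsin : sin t * n = m + cos t * n := by linear_combination ht
  set a := ⌊cos t * n⌋₊
  by_cases ha : (a : ℝ) = cos t * n
  · right
    have hb : (0 : ℤ) ≤ a + m := by
      have : (0 : ℝ) ≤ sin t * n :=
        mul_nonneg (Real.sin_nonneg_of_nonneg_of_le_pi (by linarith) (by linarith)) n.cast_nonneg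
      exact_mod_cast (show (0 : ℝ) ≤ a + m by linarith)
    lift (a : ℤ) + m to ℕ using hb with b hab
    refine ⟨(a, b), ?_, by omega⟩
    have hbt : (b : ℝ) = sin t * n := by
      rw [hsin, ← ha]; exact_mod_cast hab.trans (add_comm _ _)
    have : (a : ℝ) ^ 2 + b ^ 2 = n ^ 2 := by
      rw [ha, hbt]; linear_combination (n : ℝ) ^ 2 * Real.cos_sq_add_sin_sq t
    exact (by exact_mod_cast this : a ^ 2 + b ^ 2 = n ^ 2)
  · left
    have hi : (a : ℝ) < cos t * n := (Nat.floor_le hcos).lt_of_ne ha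
    have hi' : cos t * n < a + 1 := Nat.lt_floor_add_one _
    refine ⟨(a, m + a), (mem_approx_arc_iff hn).mpr ⟨t, ⟨hαt, htβ⟩, ?_⟩, by simp⟩
    push_cast
    refine ⟨hi, hi', ?_, ?_⟩ <;> linarith

theorem abs_ncard_approx_arc_sub_le (hn : 0 < n) (h0 : 0 ≤ α) (hαβ : α ≤ β) (hβ : β ≤ π / 2) :
    |((approx n (arc α β)).ncard : ℝ) - ((sin β - cos β) - (sin α - cos α)) * n| ≤
      3 + (Nat.sqAddSqReps (n ^ 2)).ncard := by
  set S := approx n (arc α β)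
  set L := Nat.sqAddSqReps (n ^ 2)
  set A := (sin α - cos α) * n
  set B := (sin β - cos β) * n
  have hAB : A ≤ B := by
    obtain ⟨hc, hs⟩ := Real.cos_le_cos_and_sin_le_sin h0 hαβ hβ
    exact mul_le_mul_of_nonneg_right (by linarith) n.cast_nonneg
  have hmaps : ∀ ij ∈ S, ij.2 - ij.1 ∈ Finset.Ioo ⌊A - 1⌋ ⌈B + 1⌉ := fun ij hij =>
    Int.mem_Ioo_floor_ceil.mpr (by
      have := sub_mem_Ioo_of_mem_approx_arc hn h0 hβ hij
      push_cast at this ⊢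
      constructor <;> linarith)
  have hinj := injOn_sub_approx_arc hn h0 hβ
  have hS : S.Finite := Set.Finite.of_finite_image
    ((Finset.finite_toSet _).subset (by rintro _ ⟨ij, hij, rfl⟩; exact hmaps ij hij)) hinj
  have hupper : (S.ncard : ℝ) ≤ B - A + 3 := by
    have hcard : S.ncard ≤ (Finset.Ioo ⌊A - 1⌋ ⌈B + 1⌉).card := by
      have := Set.ncard_le_ncard_of_injOn (t := ↑(Finset.Ioo ⌊A - 1⌋ ⌈B + 1⌉)) _ hmaps hinj
      rwa [Set.ncard_coe_finset] at this
    have hIoo := Int.card_Ioo_floor_ceil_le (show A - 1 ≤ B + 1 by linarith)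
    have : (S.ncard : ℝ) ≤ (Finset.Ioo ⌊A - 1⌋ ⌈B + 1⌉).card := by exact_mod_cast hcard
    linarith
  have hlower : B - A - 1 - L.ncard ≤ S.ncard := by
    have hsub : (↑(Finset.Ioo ⌊A⌋ ⌈B⌉) : Set ℤ) ⊆
        (fun ij : ℤ × ℤ => ij.2 - ij.1) '' S ∪ (fun p : ℕ × ℕ => (p.2 : ℤ) - p.1) '' L := by
      intro m hm
      rcases exists_mem_approx_arc_or_mem_sqAddSqReps hn h0 hαβ hβ
        (Int.mem_Ioo_floor_ceil.mp hm) with ⟨ij, hij, rfl⟩ | ⟨p, hp, rfl⟩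
      · exact .inl ⟨ij, hij, rfl⟩
      · exact .inr ⟨p, hp, rfl⟩
    have hL : L.Finite := Nat.finite_sqAddSqReps _
    have hcard : (Finset.Ioo ⌊A⌋ ⌈B⌉).card ≤ S.ncard + L.ncard := by
      rw [← Set.ncard_coe_finset]
      exact (Set.ncard_le_ncard hsub ((hS.image _).union (hL.image _))).trans
        ((Set.ncard_union_le _ _).trans
          (add_le_add (Set.ncard_image_le hS) (Set.ncard_image_le hL)))
    have hIoo := Int.sub_sub_one_le_card_Ioo_floor_ceil A B
    have : ((Finset.Ioo ⌊A⌋ ⌈B⌉).card : ℝ) ≤ S.ncard + L.ncard := by exact_mod_cast hcard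
    linarith
  rw [show ((sin β - cos β) - (sin α - cos α)) * n = B - A by ring, abs_sub_le_iff]
  constructor <;> linarith

end Arc

theorem count_arc_boxes (ε α β : ℝ) (hε : 0 < ε) (h0 : 0 ≤ α) (hαβ : α ≤ β)
    (hβ : β ≤ Real.pi / 2) :
    ∃ K : ℝ, ∀ n : ℕ, 1 ≤ n →
      |((approx n (arc α β)).ncard : ℝ)
        - ((Real.sin β - Real.cos β) - (Real.sin α - Real.cos α)) * n| ≤ K * (n : ℝ) ^ ε := by
  obtain ⟨C, hC⟩ := Nat.exists_card_divisors_le_rpow (show 0 < ε / 3 by positivity)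
  refine ⟨5 + C ^ 2, fun n hn => ?_⟩
  have hn' : (1 : ℝ) ≤ n := by exact_mod_cast hn
  have hpow : (n : ℝ) ^ (ε / 3) * ((n : ℝ) ^ 2) ^ (ε / 3) = (n : ℝ) ^ ε := by
    rw [← Real.rpow_natCast_mul (by positivity), ← Real.rpow_add (by positivity)]
    ring_nf
  have hlattice : ((Nat.sqAddSqReps (n ^ 2)).ncard : ℝ) ≤ 2 + C ^ 2 * (n : ℝ) ^ ε :=
    calc _ ≤ 2 + (n.divisors.card : ℝ) * (n ^ 2).divisors.card := by
          exact_mod_cast Nat.ncard_sqAddSqReps_sq_le (by omega : n ≠ 0)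
      _ ≤ 2 + (C * (n : ℝ) ^ (ε / 3)) * (C * ((n ^ 2 : ℕ) : ℝ) ^ (ε / 3)) := by
          gcongr 2 + ?_
          exact mul_le_mul (hC n) (hC _) (by positivity) ((Nat.cast_nonneg _).trans (hC n))
      _ = 2 + C ^ 2 * (n : ℝ) ^ ε := by rw [Nat.cast_pow, ← hpow]; ring
  have hone : 1 ≤ (n : ℝ) ^ ε := Real.one_le_rpow hn' hε.le
  linarith [abs_ncard_approx_arc_sub_le (by omega : 0 < n) h0 hαβ hβ]
end

section
/- For every integer n ≥ 1, the number of vertical boxes in C(n) equals exactly 4n, i.e., |C_v(n)| = 4n. By symmetry the number of horizontal boxes in C(n) also equals 4n. -/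
open Real Set Filter
open Topology

/-- Step past an integer multiple of 2π. -/
private lemma two_pi_int_not_Ioo {k : ℤ} {x : ℝ} (h : (k:ℝ) * (2*π) = x)
    (h1 : 0 < x) (h2 : x < π) : False := by
  have hk : 0 < k := by
    by_contra hk
    push_neg at hk
    have : (k:ℝ) ≤ 0 := by exact_mod_cast hk
    nlinarith [Real.pi_pos]
  have : (1:ℝ) ≤ (k:ℝ) := by exact_mod_cast hk
  nlinarith [Real.pi_pos]

private lemma ev_cos_lt {t : ℝ} (h : 0 < Real.sin t ∨ Real.cos t = 1) :
    ∀ᶠ s in 𝓝[>] t, Real.cos s < Real.cos t := by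
  rcases h with h | h
  · have hs : ∀ᶠ s in 𝓝 t, 0 < Real.sin s :=
      Real.continuous_sin.continuousAt.eventually (eventually_gt_nhds h)
    rw [Metric.eventually_nhds_iff] at hs
    obtain ⟨ε, hε, hsin⟩ := hs
    have anti : StrictAntiOn Real.cos (Icc t (t + ε/2)) := by
      apply strictAntiOn_of_deriv_neg (convex_Icc _ _) Real.continuous_cos.continuousOn
      intro x hx
      rw [interior_Icc] at hx
      rw [Real.deriv_cos]
      have : 0 < Real.sin x := by
        apply hsin
        rw [Real.dist_eq, abs_lt]
        constructor <;> [linarith [hx.1]; linarith [hx.2]]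
      linarith
    filter_upwards [Ioo_mem_nhdsGT (by linarith : t < t + ε/2)] with s hs'
    exact anti (left_mem_Icc.2 (by linarith)) (Ioo_subset_Icc_self hs') hs'.1
  · obtain ⟨m, hm⟩ := (Real.cos_eq_one_iff t).1 h
    filter_upwards [Ioo_mem_nhdsGT (lt_add_of_pos_right t Real.pi_pos)] with s hs'
    rw [h]
    rcases (Real.cos_le_one s).lt_or_eq with h1 | h1
    · exact h1
    · exfalso
      obtain ⟨m2, hm2⟩ := (Real.cos_eq_one_iff s).1 h1
      refine two_pi_int_not_Ioo (k := m2 - m) (x := s - t) ?_ (by linarith [hs'.1]) (by linarith [hs'.2])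
      push_cast
      linarith

private lemma ev_cos_gt {t : ℝ} (h : Real.sin t < 0 ∨ Real.cos t = -1) :
    ∀ᶠ s in 𝓝[>] t, Real.cos t < Real.cos s := by
  rcases h with h | h
  · have hs : ∀ᶠ s in 𝓝 t, Real.sin s < 0 :=
      Real.continuous_sin.continuousAt.eventually (eventually_lt_nhds h)
    rw [Metric.eventually_nhds_iff] at hs
    obtain ⟨ε, hε, hsin⟩ := hs
    have mono : StrictMonoOn Real.cos (Icc t (t + ε/2)) := by
      apply strictMonoOn_of_deriv_pos (convex_Icc _ _) Real.continuous_cos.continuousOn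
      intro x hx
      rw [interior_Icc] at hx
      rw [Real.deriv_cos]
      have : Real.sin x < 0 := by
        apply hsin
        rw [Real.dist_eq, abs_lt]
        constructor <;> [linarith [hx.1]; linarith [hx.2]]
      linarith
    filter_upwards [Ioo_mem_nhdsGT (by linarith : t < t + ε/2)] with s hs'
    exact mono (left_mem_Icc.2 (by linarith)) (Ioo_subset_Icc_self hs') hs'.1
  · obtain ⟨m, hm⟩ := Real.cos_eq_neg_one_iff.1 h
    filter_upwards [Ioo_mem_nhdsGT (lt_add_of_pos_right t Real.pi_pos)] with s hs'
    rw [h]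
    rcases (Real.neg_one_le_cos s).lt_or_eq with h1 | h1
    · exact h1
    · exfalso
      obtain ⟨m2, hm2⟩ := Real.cos_eq_neg_one_iff.1 h1.symm
      refine two_pi_int_not_Ioo (k := m2 - m) (x := s - t) ?_ (by linarith [hs'.1]) (by linarith [hs'.2])
      push_cast
      linarith

private lemma ev_sin_gt {t : ℝ} (h : 0 < Real.cos t ∨ Real.sin t = -1) :
    ∀ᶠ s in 𝓝[>] t, Real.sin t < Real.sin s := by
  rcases h with h | h
  · have hs : ∀ᶠ s in 𝓝 t, 0 < Real.cos s :=
      Real.continuous_cos.continuousAt.eventually (eventually_gt_nhds h)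
    rw [Metric.eventually_nhds_iff] at hs
    obtain ⟨ε, hε, hcos⟩ := hs
    have mono : StrictMonoOn Real.sin (Icc t (t + ε/2)) := by
      apply strictMonoOn_of_deriv_pos (convex_Icc _ _) Real.continuous_sin.continuousOn
      intro x hx
      rw [interior_Icc] at hx
      rw [Real.deriv_sin]
      apply hcos
      rw [Real.dist_eq, abs_lt]
      constructor <;> [linarith [hx.1]; linarith [hx.2]]
    filter_upwards [Ioo_mem_nhdsGT (by linarith : t < t + ε/2)] with s hs'
    exact mono (left_mem_Icc.2 (by linarith)) (Ioo_subset_Icc_self hs') hs'.1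
  · obtain ⟨m, hm⟩ := Real.sin_eq_neg_one_iff.1 h
    filter_upwards [Ioo_mem_nhdsGT (lt_add_of_pos_right t Real.pi_pos)] with s hs'
    rw [h]
    rcases (Real.neg_one_le_sin s).lt_or_eq with h1 | h1
    · exact h1
    · exfalso
      obtain ⟨m2, hm2⟩ := Real.sin_eq_neg_one_iff.1 h1.symm
      refine two_pi_int_not_Ioo (k := m2 - m) (x := s - t) ?_ (by linarith [hs'.1]) (by linarith [hs'.2])
      push_cast
      linarith

private lemma ev_sin_lt {t : ℝ} (h : Real.cos t < 0 ∨ Real.sin t = 1) :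
    ∀ᶠ s in 𝓝[>] t, Real.sin s < Real.sin t := by
  rcases h with h | h
  · have hs : ∀ᶠ s in 𝓝 t, Real.cos s < 0 :=
      Real.continuous_cos.continuousAt.eventually (eventually_lt_nhds h)
    rw [Metric.eventually_nhds_iff] at hs
    obtain ⟨ε, hε, hcos⟩ := hs
    have anti : StrictAntiOn Real.sin (Icc t (t + ε/2)) := by
      apply strictAntiOn_of_deriv_neg (convex_Icc _ _) Real.continuous_sin.continuousOn
      intro x hx
      rw [interior_Icc] at hx
      rw [Real.deriv_sin]
      apply hcos
      rw [Real.dist_eq, abs_lt]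
      constructor <;> [linarith [hx.1]; linarith [hx.2]]
    filter_upwards [Ioo_mem_nhdsGT (by linarith : t < t + ε/2)] with s hs'
    exact anti (left_mem_Icc.2 (by linarith)) (Ioo_subset_Icc_self hs') hs'.1
  · obtain ⟨m, hm⟩ := Real.sin_eq_one_iff.1 h
    filter_upwards [Ioo_mem_nhdsGT (lt_add_of_pos_right t Real.pi_pos)] with s hs'
    rw [h]
    rcases (Real.sin_le_one s).lt_or_eq with h1 | h1
    · exact h1
    · exfalso
      obtain ⟨m2, hm2⟩ := Real.sin_eq_one_iff.1 h1
      refine two_pi_int_not_Ioo (k := m2 - m) (x := s - t) ?_ (by linarith [hs'.1]) (by linarith [hs'.2])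
      push_cast
      linarith

private lemma ev_to_delta {t : ℝ} {P : ℝ → Prop} (h : ∀ᶠ s in 𝓝[>] t, P s) :
    ∃ δ > 0, ∀ s ∈ Ioo t (t + δ), P s := by
  rw [Filter.Eventually, mem_nhdsGT_iff_exists_Ioo_subset] at h
  obtain ⟨u, hu, hsub⟩ := h
  refine ⟨u - t, sub_pos.2 hu, fun s hs => hsub ?_⟩
  rw [add_sub_cancel] at hs
  exact hs

private lemma ev_cont_lt {f : ℝ → ℝ} (hf : Continuous f) {t a : ℝ} (h : f t < a) :
    ∀ᶠ s in 𝓝[>] t, f s < a :=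
  (hf.continuousAt.eventually (eventually_lt_nhds h)).filter_mono nhdsWithin_le_nhds

private lemma ev_cont_gt {f : ℝ → ℝ} (hf : Continuous f) {t a : ℝ} (h : a < f t) :
    ∀ᶠ s in 𝓝[>] t, a < f s :=
  (hf.continuousAt.eventually (eventually_gt_nhds h)).filter_mono nhdsWithin_le_nhds

private lemma sqrt_scale {n : ℕ} (hn : 1 ≤ n) (k : ℤ) :
    (n:ℝ) * Real.sqrt (1 - ((k:ℝ)/n)^2) = Real.sqrt ((n:ℝ)^2 - (k:ℝ)^2) := by
  have hn0 : (0:ℝ) < n := by exact_mod_cast hn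
  have h1 : (n:ℝ) = Real.sqrt ((n:ℝ)^2) := (Real.sqrt_sq hn0.le).symm
  nth_rewrite 1 [h1]
  rw [← Real.sqrt_mul (by positivity)]
  congr 1
  field_simp

/-- The `y`-index of the unique vertical box in the upper half plane whose left/right
sides lie on the vertical lines `x = i/n` and `x = (i+1)/n`. -/
noncomputable def Jp (n : ℕ) (i : ℤ) : ℤ :=
  if 0 < i + 1 then ⌊Real.sqrt ((n:ℝ)^2 - ((i+1 : ℤ):ℝ)^2)⌋
  else ⌈Real.sqrt ((n:ℝ)^2 - ((i+1 : ℤ):ℝ)^2)⌉ - 1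

/-- The `y`-index of the unique vertical box in the lower half plane whose left/right
sides lie on the vertical lines `x = i/n` and `x = (i+1)/n`. -/
noncomputable def Jm (n : ℕ) (i : ℤ) : ℤ :=
  if 0 ≤ i then -⌈Real.sqrt ((n:ℝ)^2 - ((i : ℤ):ℝ)^2)⌉
  else -⌊Real.sqrt ((n:ℝ)^2 - ((i : ℤ):ℝ)^2)⌋ - 1

private lemma Jp_nonneg {n : ℕ} (hn : 1 ≤ n) {i : ℤ} (h1 : -(n:ℤ) ≤ i) : 0 ≤ Jp n i := by
  rw [Jp]
  split_ifs with h
  · exact Int.floor_nonneg.2 (Real.sqrt_nonneg _)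
  · push_neg at h
    have hsq : ((i+1 : ℤ):ℝ)^2 < (n:ℝ)^2 := by
      have h2 : (0:ℤ) < n := by omega
      have : (i+1)^2 < (n:ℤ)^2 := by nlinarith
      exact_mod_cast this
    have : 0 < ⌈Real.sqrt ((n:ℝ)^2 - ((i+1 : ℤ):ℝ)^2)⌉ :=
      Int.ceil_pos.2 (Real.sqrt_pos.2 (by linarith))
    omega

private lemma Jm_le_neg_one {n : ℕ} (hn : 1 ≤ n) {i : ℤ} (h2 : i ≤ (n:ℤ) - 1) :
    Jm n i ≤ -1 := by
  rw [Jm]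
  split_ifs with h
  · have hsq : ((i : ℤ):ℝ)^2 < (n:ℝ)^2 := by
      have h3 : (0:ℤ) < n := by omega
      have : (i:ℤ)^2 < (n:ℤ)^2 := by nlinarith
      exact_mod_cast this
    have : 0 < ⌈Real.sqrt ((n:ℝ)^2 - ((i : ℤ):ℝ)^2)⌉ :=
      Int.ceil_pos.2 (Real.sqrt_pos.2 (by linarith))
    omega
  · have : 0 ≤ ⌊Real.sqrt ((n:ℝ)^2 - ((i : ℤ):ℝ)^2)⌋ := Int.floor_nonneg.2 (Real.sqrt_nonneg _)
    omega

private lemma isVertical_top {n : ℕ} (hn : 1 ≤ n) {i : ℤ} (h1 : -(n:ℤ) ≤ i)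
    (h2 : i ≤ (n:ℤ) - 1) : IsVertical n i (Jp n i) := by
  have hn0 : (0:ℝ) < n := by exact_mod_cast hn
  set k : ℤ := i + 1 with hk_def
  have hkr : (k:ℝ) = (i:ℝ) + 1 := by rw [hk_def]; push_cast; ring
  have hc1 : (-1:ℝ) < (k:ℝ)/n := by
    rw [lt_div_iff₀ hn0]
    have : (-(n:ℤ):ℝ) < (k:ℝ) := by exact_mod_cast (by omega : -(n:ℤ) < k)
    push_cast at this ⊢
    linarith
  have hc2 : (k:ℝ)/n ≤ 1 := by
    rw [div_le_one hn0]
    exact_mod_cast (by omega : k ≤ (n:ℤ))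
  set t := Real.arccos ((k:ℝ)/n) with ht_def
  have hct : Real.cos t = (k:ℝ)/n := Real.cos_arccos hc1.le hc2
  have hst : Real.sin t = Real.sqrt (1 - ((k:ℝ)/n)^2) := Real.sin_arccos _
  set m := Real.sqrt ((n:ℝ)^2 - (k:ℝ)^2) with hm_def
  have hm : Real.sin t * n = m := by rw [hst, mul_comm]; exact sqrt_scale hn k
  have hm0 : 0 ≤ m := Real.sqrt_nonneg _
  have hA : 0 < Real.sin t ∨ Real.cos t = 1 := by
    by_cases hkn : k = (n:ℤ)
    · right; rw [hct, hkn]; push_cast; field_simp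
    · left
      rw [hst]
      apply Real.sqrt_pos.2
      have hkk : (k:ℝ)^2 < (n:ℝ)^2 := by
        have : k^2 < ((n:ℕ):ℤ)^2 := by nlinarith [(by omega : -(n:ℤ)+1 ≤ k), (by omega : k ≤ (n:ℤ)-1), (by exact_mod_cast hn : (1:ℤ) ≤ (n:ℕ))]
        exact_mod_cast this
      have : ((k:ℝ)/n)^2 < 1 := by
        rw [div_pow, div_lt_one (by positivity)]; linarith
      linarith
  have e1 : ∀ᶠ s in 𝓝[>] t, Real.cos s < ((i:ℝ)+1)/n := by
    filter_upwards [ev_cos_lt hA] with s hs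
    rwa [hct, hkr] at hs
  have e2 : ∀ᶠ s in 𝓝[>] t, (i:ℝ)/n < Real.cos s := by
    apply ev_cont_gt Real.continuous_cos
    rw [hct, hkr]
    exact (div_lt_div_iff_of_pos_right hn0).2 (by linarith)
  have key : ((Jp n i:ℝ)/n ≤ Real.sin t ∧ Real.sin t ≤ ((Jp n i:ℝ)+1)/n) ∧
      ∀ᶠ s in 𝓝[>] t, (Jp n i:ℝ)/n < Real.sin s ∧ Real.sin s < ((Jp n i:ℝ)+1)/n := by
    by_cases hk : 0 < k
    · have hjp : Jp n i = ⌊m⌋ := by rw [Jp, ← hk_def, if_pos hk, ← hm_def]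
      have hcpos : 0 < Real.cos t := by
        rw [hct]; exact div_pos (by exact_mod_cast hk) hn0
      have hup : Real.sin t < ((Jp n i:ℝ)+1)/n := by
        rw [lt_div_iff₀ hn0, hjp]
        push_cast
        linarith [Int.lt_floor_add_one m]
      have hlow : (Jp n i:ℝ)/n ≤ Real.sin t := by
        rw [div_le_iff₀ hn0, hjp]
        linarith [Int.floor_le m]
      refine ⟨⟨hlow, hup.le⟩, ?_⟩
      filter_upwards [ev_sin_gt (Or.inl hcpos), ev_cont_lt Real.continuous_sin hup] with s hs1 hs2
      exact ⟨lt_of_le_of_lt hlow hs1, hs2⟩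
    · have hjp : Jp n i = ⌈m⌉ - 1 := by rw [Jp, ← hk_def, if_neg hk, ← hm_def]
      push_neg at hk
      have hdec : Real.cos t < 0 ∨ Real.sin t = 1 := by
        rcases hk.lt_or_eq with h | h
        · left; rw [hct]; exact div_neg_of_neg_of_pos (by exact_mod_cast h) hn0
        · right
          rw [hst, show ((k:ℝ)/n) = 0 by rw [h]; simp]
          simp
      have hup : Real.sin t ≤ ((Jp n i:ℝ)+1)/n := by
        rw [le_div_iff₀ hn0, hjp]
        push_cast
        linarith [Int.le_ceil m]
      have hlow : (Jp n i:ℝ)/n < Real.sin t := by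
        rw [div_lt_iff₀ hn0, hjp]
        push_cast
        linarith [Int.ceil_lt_add_one m]
      refine ⟨⟨hlow.le, hup⟩, ?_⟩
      filter_upwards [ev_sin_lt hdec, ev_cont_gt Real.continuous_sin hlow] with s hs1 hs2
      exact ⟨hs2, lt_of_lt_of_le hs1 hup⟩
  have hev : ∀ᶠ s in 𝓝[>] t, (Real.cos s, Real.sin s) ∈ boxInt n i (Jp n i) := by
    filter_upwards [e1, e2, key.2] with s hs1 hs2 hs3
    exact ⟨hs2, hs1, hs3.1, hs3.2⟩
  obtain ⟨δ, hδ, hδ'⟩ := ev_to_delta hev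
  refine ⟨t, δ, hδ, ⟨Or.inr ?_, key.1.1, key.1.2⟩, hδ'⟩
  show Real.cos t = ((i:ℝ)+1)/n
  rw [hct, hkr]

private lemma isVertical_bot {n : ℕ} (hn : 1 ≤ n) {i : ℤ} (h1 : -(n:ℤ) ≤ i)
    (h2 : i ≤ (n:ℤ) - 1) : IsVertical n i (Jm n i) := by
  have hn0 : (0:ℝ) < n := by exact_mod_cast hn
  have hc1 : (-1:ℝ) ≤ (i:ℝ)/n := by
    rw [le_div_iff₀ hn0]
    have : (-(n:ℤ):ℝ) ≤ (i:ℝ) := by exact_mod_cast h1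
    push_cast at this ⊢
    linarith
  have hc2 : (i:ℝ)/n ≤ 1 := by
    rw [div_le_one hn0]
    exact_mod_cast (by omega : i ≤ (n:ℤ))
  set t := -Real.arccos ((i:ℝ)/n) with ht_def
  have hct : Real.cos t = (i:ℝ)/n := by
    rw [ht_def, Real.cos_neg]; exact Real.cos_arccos hc1 hc2
  have hst : Real.sin t = -Real.sqrt (1 - ((i:ℝ)/n)^2) := by
    rw [ht_def, Real.sin_neg, Real.sin_arccos]
  set m := Real.sqrt ((n:ℝ)^2 - (i:ℝ)^2) with hm_def
  have hm : Real.sin t * n = -m := by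
    rw [hst, hm_def, ← sqrt_scale hn i]; ring
  have hm0 : 0 ≤ m := Real.sqrt_nonneg _
  have hB : Real.sin t < 0 ∨ Real.cos t = -1 := by
    by_cases hkn : i = -(n:ℤ)
    · right; rw [hct, hkn]; push_cast; field_simp
    · left
      rw [hst, neg_lt, neg_zero]
      apply Real.sqrt_pos.2
      have hkk : (i:ℝ)^2 < (n:ℝ)^2 := by
        have : i^2 < ((n:ℕ):ℤ)^2 := by nlinarith [(by omega : -(n:ℤ)+1 ≤ i), (by omega : i ≤ (n:ℤ)-1), (by exact_mod_cast hn : (1:ℤ) ≤ (n:ℕ))]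
        exact_mod_cast this
      have : ((i:ℝ)/n)^2 < 1 := by
        rw [div_pow, div_lt_one (by positivity)]; linarith
      linarith
  have e1 : ∀ᶠ s in 𝓝[>] t, (i:ℝ)/n < Real.cos s := by
    filter_upwards [ev_cos_gt hB] with s hs
    rwa [hct] at hs
  have e2 : ∀ᶠ s in 𝓝[>] t, Real.cos s < ((i:ℝ)+1)/n := by
    apply ev_cont_lt Real.continuous_cos
    rw [hct]
    exact (div_lt_div_iff_of_pos_right hn0).2 (by linarith)
  have key : ((Jm n i:ℝ)/n ≤ Real.sin t ∧ Real.sin t ≤ ((Jm n i:ℝ)+1)/n) ∧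
      ∀ᶠ s in 𝓝[>] t, (Jm n i:ℝ)/n < Real.sin s ∧ Real.sin s < ((Jm n i:ℝ)+1)/n := by
    by_cases hk : 0 ≤ i
    · have hjm : Jm n i = -⌈m⌉ := by rw [Jm, ← hm_def, if_pos hk]
      have hinc : 0 < Real.cos t ∨ Real.sin t = -1 := by
        rcases hk.lt_or_eq with h | h
        · left; rw [hct]; exact div_pos (by exact_mod_cast h) hn0
        · right
          rw [hst, show ((i:ℝ)/n) = 0 by rw [← h]; simp]
          simp
      have hup : Real.sin t < ((Jm n i:ℝ)+1)/n := by
        rw [lt_div_iff₀ hn0, hjm]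
        push_cast
        linarith [Int.ceil_lt_add_one m]
      have hlow : (Jm n i:ℝ)/n ≤ Real.sin t := by
        rw [div_le_iff₀ hn0, hjm]
        push_cast
        linarith [Int.le_ceil m]
      refine ⟨⟨hlow, hup.le⟩, ?_⟩
      filter_upwards [ev_sin_gt hinc, ev_cont_lt Real.continuous_sin hup] with s hs1 hs2
      exact ⟨lt_of_le_of_lt hlow hs1, hs2⟩
    · push_neg at hk
      have hjm : Jm n i = -⌊m⌋ - 1 := by rw [Jm, ← hm_def, if_neg (by omega)]
      have hdec : Real.cos t < 0 ∨ Real.sin t = 1 := by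
        left; rw [hct]; exact div_neg_of_neg_of_pos (by exact_mod_cast hk) hn0
      have hup : Real.sin t ≤ ((Jm n i:ℝ)+1)/n := by
        rw [le_div_iff₀ hn0, hjm]
        push_cast
        linarith [Int.floor_le m]
      have hlow : (Jm n i:ℝ)/n < Real.sin t := by
        rw [div_lt_iff₀ hn0, hjm]
        push_cast
        linarith [Int.lt_floor_add_one m]
      refine ⟨⟨hlow.le, hup⟩, ?_⟩
      filter_upwards [ev_sin_lt hdec, ev_cont_gt Real.continuous_sin hlow] with s hs1 hs2
      exact ⟨hs2, lt_of_lt_of_le hs1 hup⟩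
  have hev : ∀ᶠ s in 𝓝[>] t, (Real.cos s, Real.sin s) ∈ boxInt n i (Jm n i) := by
    filter_upwards [e1, e2, key.2] with s hs1 hs2 hs3
    exact ⟨hs1, hs2, hs3.1, hs3.2⟩
  obtain ⟨δ, hδ, hδ'⟩ := ev_to_delta hev
  exact ⟨t, δ, hδ, ⟨Or.inl hct, key.1.1, key.1.2⟩, hδ'⟩

set_option maxHeartbeats 1000000 in
private lemma vertical_classify {n : ℕ} (hn : 1 ≤ n) {i j : ℤ} (h : IsVertical n i j) :
    (-(n:ℤ) ≤ i ∧ i ≤ (n:ℤ) - 1) ∧ (j = Jp n i ∨ j = Jm n i) := by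
  have hn0 : (0:ℝ) < n := by exact_mod_cast hn
  obtain ⟨t, δ, hδ, ⟨hside, hy1, hy2⟩, harc⟩ := h
  replace hside : Real.cos t = (i:ℝ)/n ∨ Real.cos t = ((i:ℝ)+1)/n := hside
  replace hy1 : (j:ℝ)/n ≤ Real.sin t := hy1
  replace hy2 : Real.sin t ≤ ((j:ℝ)+1)/n := hy2
  have hbox : ∀ᶠ s in 𝓝[>] t, (Real.cos s, Real.sin s) ∈ boxInt n i j :=
    Filter.eventually_of_mem (Ioo_mem_nhdsGT (lt_add_of_pos_right t hδ)) harc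
  have hcs1 : ∀ᶠ s in 𝓝[>] t, (i:ℝ)/n < Real.cos s := hbox.mono fun s hs => hs.1
  have hcs2 : ∀ᶠ s in 𝓝[>] t, Real.cos s < ((i:ℝ)+1)/n := hbox.mono fun s hs => hs.2.1
  have hsn1 : ∀ᶠ s in 𝓝[>] t, (j:ℝ)/n < Real.sin s := hbox.mono fun s hs => hs.2.2.1
  have hsn2 : ∀ᶠ s in 𝓝[>] t, Real.sin s < ((j:ℝ)+1)/n := hbox.mono fun s hs => hs.2.2.2
  have hpyth : Real.sin t^2 + Real.cos t^2 = 1 := Real.sin_sq_add_cos_sq t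
  have hy1' : (j:ℝ) ≤ Real.sin t * n := by rw [div_le_iff₀ hn0] at hy1; exact hy1
  have hy2' : Real.sin t * n ≤ (j:ℝ) + 1 := by rw [le_div_iff₀ hn0] at hy2; exact hy2
  have main_top : (0 < Real.sin t ∨ Real.cos t = 1) →
      ((-(n:ℤ) ≤ i ∧ i ≤ (n:ℤ) - 1) ∧ j = Jp n i) := by
    intro hA
    obtain ⟨s₀, hs₀c, hs₀1, hs₀2⟩ := ((ev_cos_lt hA).and (hcs1.and hcs2)).exists
    have hct : Real.cos t = ((i:ℝ)+1)/n := by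
      rcases hside with h | h
      · exfalso; rw [h] at hs₀c; linarith
      · exact h
    have hcne : Real.cos t ≠ -1 := by
      intro hc
      rcases hA with h | h
      · nlinarith
      · rw [h] at hc; norm_num at hc
    have hi2 : i ≤ (n:ℤ) - 1 := by
      have h1 : ((i:ℝ)+1)/n ≤ 1 := hct ▸ Real.cos_le_one t
      rw [div_le_one hn0] at h1
      have : (i:ℤ) + 1 ≤ (n:ℤ) := by exact_mod_cast h1
      omega
    have hi1 : -(n:ℤ) ≤ i := by
      have h1 : (-1:ℝ) < Real.cos t := (Real.neg_one_le_cos t).lt_of_ne (Ne.symm hcne)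
      rw [hct, lt_div_iff₀ hn0] at h1
      have : -(n:ℤ) < i + 1 := by exact_mod_cast (by linarith : -(n:ℝ) < (i:ℝ) + 1)
      omega
    have hsnn : 0 ≤ Real.sin t := by
      rcases hA with h | h
      · exact h.le
      · nlinarith
    have hseq : Real.sin t * n = Real.sqrt ((n:ℝ)^2 - ((i+1:ℤ):ℝ)^2) := by
      have hs : Real.sin t = Real.sqrt (1 - Real.cos t^2) := by
        rw [show (1:ℝ) - Real.cos t^2 = Real.sin t^2 by nlinarith, Real.sqrt_sq hsnn]
      have h2 : Real.cos t = ((i+1:ℤ):ℝ)/n := by rw [hct]; norm_cast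
      rw [hs, h2, mul_comm]
      exact sqrt_scale hn (i+1)
    refine ⟨⟨hi1, hi2⟩, ?_⟩
    by_cases hk : 0 < i + 1
    · have hcpos : 0 < Real.cos t := by
        rw [hct]
        exact div_pos (by exact_mod_cast (show (0:ℤ) < i + 1 from hk)) hn0
      have hlt : Real.sin t * n < (j:ℝ) + 1 := by
        rcases hy2'.lt_or_eq with h | h
        · exact h
        · exfalso
          have hteq : Real.sin t = ((j:ℝ)+1)/n := by rw [eq_div_iff hn0.ne']; exact h
          obtain ⟨s₁, hs₁a, hs₁b⟩ := ((ev_sin_gt (Or.inl hcpos)).and hsn2).exists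
          rw [hteq] at hs₁a; linarith
      have hfl : ⌊Real.sin t * n⌋ = j := Int.floor_eq_iff.2 ⟨hy1', by push_cast; exact hlt⟩
      rw [Jp, if_pos hk, ← hseq, hfl]
    · have hcnp : Real.cos t ≤ 0 := by
        rw [hct]
        apply div_nonpos_of_nonpos_of_nonneg _ hn0.le
        exact_mod_cast (show i + 1 ≤ (0:ℤ) by omega)
      have hdec : Real.cos t < 0 ∨ Real.sin t = 1 := by
        rcases hcnp.lt_or_eq with h | h
        · exact Or.inl h
        · right
          rcases mul_eq_zero.1 (show (Real.sin t - 1) * (Real.sin t + 1) = 0 by nlinarith)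
            with h3 | h3
          · linarith
          · linarith
      have hgt : (j:ℝ) < Real.sin t * n := by
        rcases hy1'.lt_or_eq with h | h
        · exact h
        · exfalso
          have hteq : Real.sin t = (j:ℝ)/n := by rw [eq_div_iff hn0.ne']; linarith
          obtain ⟨s₁, hs₁a, hs₁b⟩ := ((ev_sin_lt hdec).and hsn1).exists
          rw [hteq] at hs₁a; linarith
      have hcl : ⌈Real.sin t * n⌉ = j + 1 := by
        rw [Int.ceil_eq_iff]
        constructor
        · push_cast; linarith
        · push_cast; linarith
      rw [Jp, if_neg hk, ← hseq]
      omega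
  have main_bot : (Real.sin t < 0 ∨ Real.cos t = -1) →
      ((-(n:ℤ) ≤ i ∧ i ≤ (n:ℤ) - 1) ∧ j = Jm n i) := by
    intro hB
    obtain ⟨s₀, hs₀c, hs₀1, hs₀2⟩ := ((ev_cos_gt hB).and (hcs1.and hcs2)).exists
    have hct : Real.cos t = (i:ℝ)/n := by
      rcases hside with h | h
      · exact h
      · exfalso; rw [h] at hs₀c; linarith
    have hcne : Real.cos t ≠ 1 := by
      intro hc
      rcases hB with h | h
      · nlinarith
      · rw [h] at hc; norm_num at hc
    have hi2 : i ≤ (n:ℤ) - 1 := by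
      have h1 : Real.cos t < 1 := (Real.cos_le_one t).lt_of_ne hcne
      rw [hct, div_lt_one hn0] at h1
      have : i < (n:ℤ) := by exact_mod_cast h1
      omega
    have hi1 : -(n:ℤ) ≤ i := by
      have h1 : (-1:ℝ) ≤ Real.cos t := Real.neg_one_le_cos t
      rw [hct, le_div_iff₀ hn0] at h1
      exact_mod_cast (by linarith : -(n:ℝ) ≤ (i:ℝ))
    have hsnp : Real.sin t ≤ 0 := by
      rcases hB with h | h
      · exact h.le
      · nlinarith
    have hseq : Real.sin t * n = -Real.sqrt ((n:ℝ)^2 - (i:ℝ)^2) := by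
      have h4 : Real.sqrt (1 - Real.cos t^2) = -Real.sin t := by
        rw [show (1:ℝ) - Real.cos t^2 = (-Real.sin t)^2 by nlinarith,
          Real.sqrt_sq (by linarith)]
      rw [hct] at h4
      rw [← sqrt_scale hn i, h4]
      ring
    refine ⟨⟨hi1, hi2⟩, ?_⟩
    by_cases hk : 0 ≤ i
    · have hinc : 0 < Real.cos t ∨ Real.sin t = -1 := by
        rcases hk.lt_or_eq with h | h
        · left
          rw [hct]
          exact div_pos (by exact_mod_cast h) hn0
        · right
          have hc0 : Real.cos t = 0 := by rw [hct, ← h]; simp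
          rcases mul_eq_zero.1 (show (Real.sin t - 1) * (Real.sin t + 1) = 0 by nlinarith)
            with h3 | h3
          · linarith
          · linarith
      have hlt : Real.sin t * n < (j:ℝ) + 1 := by
        rcases hy2'.lt_or_eq with h | h
        · exact h
        · exfalso
          have hteq : Real.sin t = ((j:ℝ)+1)/n := by rw [eq_div_iff hn0.ne']; exact h
          obtain ⟨s₁, hs₁a, hs₁b⟩ := ((ev_sin_gt hinc).and hsn2).exists
          rw [hteq] at hs₁a; linarith
      have hfl : ⌊Real.sin t * n⌋ = j := Int.floor_eq_iff.2 ⟨hy1', by push_cast; exact hlt⟩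
      rw [Jm, if_pos hk, ← Int.floor_neg, ← hseq, hfl]
    · have hdec : Real.cos t < 0 ∨ Real.sin t = 1 := by
        left
        rw [hct]
        exact div_neg_of_neg_of_pos (by exact_mod_cast (show i < (0:ℤ) by omega)) hn0
      have hgt : (j:ℝ) < Real.sin t * n := by
        rcases hy1'.lt_or_eq with h | h
        · exact h
        · exfalso
          have hteq : Real.sin t = (j:ℝ)/n := by rw [eq_div_iff hn0.ne']; linarith
          obtain ⟨s₁, hs₁a, hs₁b⟩ := ((ev_sin_lt hdec).and hsn1).exists
          rw [hteq] at hs₁a; linarith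
      have hcl : ⌈Real.sin t * n⌉ = j + 1 := by
        rw [Int.ceil_eq_iff]
        constructor
        · push_cast; linarith
        · push_cast; linarith
      rw [hseq, Int.ceil_neg] at hcl
      rw [Jm, if_neg hk]
      omega
  rcases lt_trichotomy (Real.sin t) 0 with hst | hst | hst
  · obtain ⟨hi, hj⟩ := main_bot (Or.inl hst)
    exact ⟨hi, Or.inr hj⟩
  · rcases mul_eq_zero.1 (show (Real.cos t - 1) * (Real.cos t + 1) = 0 by nlinarith)
      with h | h
    · obtain ⟨hi, hj⟩ := main_top (Or.inr (by linarith))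
      exact ⟨hi, Or.inl hj⟩
    · obtain ⟨hi, hj⟩ := main_bot (Or.inr (by linarith))
      exact ⟨hi, Or.inr hj⟩
  · obtain ⟨hi, hj⟩ := main_top (Or.inl hst)
    exact ⟨hi, Or.inl hj⟩

private lemma vset_eq {n : ℕ} (hn : 1 ≤ n) :
    {ij : ℤ × ℤ | IsVertical n ij.1 ij.2} =
      (fun i => (i, Jp n i)) '' (Set.Icc (-(n:ℤ)) ((n:ℤ)-1)) ∪
      (fun i => (i, Jm n i)) '' (Set.Icc (-(n:ℤ)) ((n:ℤ)-1)) := by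
  ext ⟨a, b⟩
  simp only [mem_setOf_eq, mem_union, mem_image, mem_Icc]
  constructor
  · intro h
    obtain ⟨⟨h1, h2⟩, hj⟩ := vertical_classify hn h
    rcases hj with hj | hj
    · exact Or.inl ⟨a, ⟨h1, h2⟩, by rw [hj]⟩
    · exact Or.inr ⟨a, ⟨h1, h2⟩, by rw [hj]⟩
  · rintro (⟨c, ⟨h1, h2⟩, heq⟩ | ⟨c, ⟨h1, h2⟩, heq⟩)
    · injection heq with e1 e2
      subst e1; subst e2
      exact isVertical_top hn h1 h2
    · injection heq with e1 e2
      subst e1; subst e2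
      exact isVertical_bot hn h1 h2

private lemma vset_card {n : ℕ} (hn : 1 ≤ n) :
    {ij : ℤ × ℤ | IsVertical n ij.1 ij.2}.ncard = 4 * n := by
  rw [vset_eq hn]
  have hinj1 : Function.Injective (fun i : ℤ => (i, Jp n i)) :=
    fun a b h => congrArg Prod.fst h
  have hinj2 : Function.Injective (fun i : ℤ => (i, Jm n i)) :=
    fun a b h => congrArg Prod.fst h
  have hfin : (Set.Icc (-(n:ℤ)) ((n:ℤ)-1)).Finite := Set.finite_Icc _ _
  have hcard : (Set.Icc (-(n:ℤ)) ((n:ℤ)-1)).ncard = 2 * n := by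
    rw [← Finset.coe_Icc, Set.ncard_coe_finset, Int.card_Icc]
    omega
  have hdisj : Disjoint ((fun i => (i, Jp n i)) '' (Set.Icc (-(n:ℤ)) ((n:ℤ)-1)))
      ((fun i => (i, Jm n i)) '' (Set.Icc (-(n:ℤ)) ((n:ℤ)-1))) := by
    rw [Set.disjoint_left]
    rintro p hp hq
    simp only [mem_image, mem_Icc] at hp hq
    obtain ⟨c, ⟨hc1, hc2⟩, heq⟩ := hp
    obtain ⟨d, ⟨hd1, hd2⟩, heq'⟩ := hq
    rw [← heq'] at heq
    injection heq with e1 e2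
    have h1 := Jp_nonneg hn hc1
    have h2 := Jm_le_neg_one hn hd2
    omega
  rw [Set.ncard_union_eq hdisj (hfin.image _) (hfin.image _),
    Set.ncard_image_of_injective _ hinj1, Set.ncard_image_of_injective _ hinj2, hcard]
  omega

private lemma horiz_iff (n : ℕ) (i j : ℤ) : IsHorizontal n i j ↔ IsVertical n (-j-1) i := by
  constructor
  · rintro ⟨t, δ, hδ, ⟨hside, hx1, hx2⟩, harc⟩
    replace hside : Real.sin t = (j:ℝ)/n ∨ Real.sin t = ((j:ℝ)+1)/n := hside
    replace hx1 : (i:ℝ)/n ≤ Real.cos t := hx1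
    replace hx2 : Real.cos t ≤ ((i:ℝ)+1)/n := hx2
    refine ⟨t + π/2, δ, hδ, ⟨?_, ?_, ?_⟩, ?_⟩
    · rcases hside with h | h
      · right
        show Real.cos (t + π/2) = (((-j-1:ℤ):ℝ)+1)/n
        rw [Real.cos_add_pi_div_two, h]; push_cast; ring
      · left
        show Real.cos (t + π/2) = ((-j-1:ℤ):ℝ)/n
        rw [Real.cos_add_pi_div_two, h]; push_cast; ring
    · show (i:ℝ)/n ≤ Real.sin (t + π/2)
      rw [Real.sin_add_pi_div_two]; exact hx1
    · show Real.sin (t + π/2) ≤ ((i:ℝ)+1)/n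
      rw [Real.sin_add_pi_div_two]; exact hx2
    · intro s hs
      obtain ⟨b1, b2, b3, b4⟩ := harc (s - π/2) ⟨by linarith [hs.1], by linarith [hs.2]⟩
      have hc : Real.cos s = -Real.sin (s - π/2) := by
        rw [Real.sin_sub_pi_div_two, neg_neg]
      have hsn : Real.sin s = Real.cos (s - π/2) := (Real.cos_sub_pi_div_two s).symm
      have e1 : ((-j-1:ℤ):ℝ)/n = -(((j:ℝ)+1)/n) := by push_cast; ring
      have e2 : (((-j-1:ℤ):ℝ)+1)/n = -((j:ℝ)/n) := by push_cast; ring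
      exact ⟨by rw [e1, hc]; exact neg_lt_neg b4, by rw [e2, hc]; exact neg_lt_neg b3,
        by rw [hsn]; exact b1, by rw [hsn]; exact b2⟩
  · rintro ⟨t, δ, hδ, ⟨hside, hy1, hy2⟩, harc⟩
    replace hside : Real.cos t = ((-j-1:ℤ):ℝ)/n ∨ Real.cos t = (((-j-1:ℤ):ℝ)+1)/n := hside
    replace hy1 : (i:ℝ)/n ≤ Real.sin t := hy1
    replace hy2 : Real.sin t ≤ ((i:ℝ)+1)/n := hy2
    refine ⟨t - π/2, δ, hδ, ⟨?_, ?_, ?_⟩, ?_⟩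
    · rcases hside with h | h
      · right
        show Real.sin (t - π/2) = ((j:ℝ)+1)/n
        rw [Real.sin_sub_pi_div_two, h]; push_cast; ring
      · left
        show Real.sin (t - π/2) = (j:ℝ)/n
        rw [Real.sin_sub_pi_div_two, h]; push_cast; ring
    · show (i:ℝ)/n ≤ Real.cos (t - π/2)
      rw [Real.cos_sub_pi_div_two]; exact hy1
    · show Real.cos (t - π/2) ≤ ((i:ℝ)+1)/n
      rw [Real.cos_sub_pi_div_two]; exact hy2
    · intro s hs
      obtain ⟨b1, b2, b3, b4⟩ := harc (s + π/2) ⟨by linarith [hs.1], by linarith [hs.2]⟩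
      rw [Real.cos_add_pi_div_two] at b1 b2
      rw [Real.sin_add_pi_div_two] at b3 b4
      have e1 : ((-j-1:ℤ):ℝ)/n = -(((j:ℝ)+1)/n) := by push_cast; ring
      have e2 : (((-j-1:ℤ):ℝ)+1)/n = -((j:ℝ)/n) := by push_cast; ring
      rw [e1] at b1
      rw [e2] at b2
      exact ⟨b3, b4, by linarith, by linarith⟩

theorem card_vertical_and_horizontal (n : ℕ) (hn : 1 ≤ n) :
    {ij ∈ approx n unitCircle | IsVertical n ij.1 ij.2}.ncard = 4 * n ∧
    {ij ∈ approx n unitCircle | IsHorizontal n ij.1 ij.2}.ncard = 4 * n := by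
  have happV : ∀ p : ℤ × ℤ, IsVertical n p.1 p.2 → p ∈ approx n unitCircle := by
    rintro ⟨a, b⟩ ⟨t, δ, hδ, -, harc⟩
    exact ⟨(Real.cos (t+δ/2), Real.sin (t+δ/2)),
      harc _ ⟨by linarith, by linarith⟩, Real.cos_sq_add_sin_sq _⟩
  have happH : ∀ p : ℤ × ℤ, IsHorizontal n p.1 p.2 → p ∈ approx n unitCircle := by
    rintro ⟨a, b⟩ ⟨t, δ, hδ, -, harc⟩
    exact ⟨(Real.cos (t+δ/2), Real.sin (t+δ/2)),
      harc _ ⟨by linarith, by linarith⟩, Real.cos_sq_add_sin_sq _⟩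
  have hV : {ij ∈ approx n unitCircle | IsVertical n ij.1 ij.2} =
      {ij : ℤ × ℤ | IsVertical n ij.1 ij.2} := by
    ext p
    simp only [mem_setOf_eq, Set.mem_sep_iff]
    exact ⟨fun h => h.2, fun h => ⟨happV p h, h⟩⟩
  have hH : {ij ∈ approx n unitCircle | IsHorizontal n ij.1 ij.2} =
      {ij : ℤ × ℤ | IsHorizontal n ij.1 ij.2} := by
    ext p
    simp only [mem_setOf_eq, Set.mem_sep_iff]
    exact ⟨fun h => h.2, fun h => ⟨happH p h, h⟩⟩
  have hVcard := vset_card hn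
  refine ⟨by rw [hV]; exact hVcard, ?_⟩
  rw [hH]
  have hinj : Function.Injective (fun p : ℤ × ℤ => (p.2, -p.1-1)) := by
    rintro ⟨a, b⟩ ⟨c, d⟩ h
    simp only [Prod.mk.injEq] at h ⊢
    omega
  have himg : {ij : ℤ × ℤ | IsHorizontal n ij.1 ij.2} =
      (fun p : ℤ × ℤ => (p.2, -p.1-1)) '' {ij : ℤ × ℤ | IsVertical n ij.1 ij.2} := by
    ext ⟨a, b⟩
    simp only [mem_setOf_eq, mem_image]
    constructor
    · intro h
      refine ⟨(-b-1, a), (horiz_iff n a b).1 h, ?_⟩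
      show (a, -(-b-1)-1) = (a, b)
      rw [show -(-b-1)-1 = b by ring]
    · rintro ⟨⟨c, d⟩, hv, heq⟩
      injection heq with e1 e2
      subst e1; subst e2
      rw [horiz_iff, show (-(-c-1)-1 : ℤ) = c by ring]
      exact hv
  rw [himg, Set.ncard_image_of_injective _ hinj]
  exact hVcard
end

section
/- For every integer n ≥ 1, the number of boxes in C(n) that are both vertical and horizontal equals r₂(n²) = #{(i,j) ∈ ℤ² : i² + j² = n²}; these boxes are exactly the boxes of C(n) in which C enters (counter-clockwise) at a vertex, and they correspond bijectively to the lattice points (i,j) with i² + j² = n². -/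
open Real Set Filter

/-- `p` is a corner (vertex) of the box `B_{i,j}(n)`. -/
def OnBoxCorner (n : ℕ) (i j : ℤ) (p : ℝ × ℝ) : Prop :=
  (p.1 = (i : ℝ) / n ∨ p.1 = ((i : ℝ) + 1) / n) ∧
  (p.2 = (j : ℝ) / n ∨ p.2 = ((j : ℝ) + 1) / n)

/-- The counter-clockwise oriented unit circle enters the box `B_{i,j}(n)` at a vertex. -/
def EntersAtVertex (n : ℕ) (i j : ℤ) : Prop :=
  ∃ t δ : ℝ, 0 < δ ∧ OnBoxCorner n i j (Real.cos t, Real.sin t) ∧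
    ∀ s ∈ Set.Ioo t (t + δ), (Real.cos s, Real.sin s) ∈ boxInt n i j

/-- `r₂(m)`: the number of representations of `m` as a sum of two squares of integers. -/
noncomputable def r2 (m : ℕ) : ℕ := {ij : ℤ × ℤ | ij.1 ^ 2 + ij.2 ^ 2 = (m : ℤ)}.ncard

namespace Aux

/-- entering at a given point -/
def EntersAtPt (n : ℕ) (i j : ℤ) (P : ℝ × ℝ) : Prop :=
  ∃ t δ : ℝ, 0 < δ ∧ (Real.cos t, Real.sin t) = P ∧
    ∀ s ∈ Set.Ioo t (t + δ), (Real.cos s, Real.sin s) ∈ boxInt n i j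

def Psi : ℤ × ℤ → ℤ × ℤ := fun pq =>
  (if 0 < pq.2 ∨ (pq.2 = 0 ∧ 0 < pq.1) then pq.1 - 1 else pq.1,
   if 0 < pq.1 ∨ (pq.1 = 0 ∧ pq.2 < 0) then pq.2 else pq.2 - 1)

variable {n : ℕ} {i j : ℤ}

lemma npos (hn : 1 ≤ n) : (0:ℝ) < n := by exact_mod_cast Nat.lt_of_lt_of_le Nat.zero_lt_one hn

lemma box_disjoint (hn : 1 ≤ n) {i' j' : ℤ} {P : ℝ × ℝ}
    (h : P ∈ boxInt n i j) (h' : P ∈ boxInt n i' j') : i = i' ∧ j = j' := by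
  obtain ⟨h1, h2, h3, h4⟩ := h
  obtain ⟨h1', h2', h3', h4'⟩ := h'
  have hN := npos hn
  constructor
  · have e1 : ⌊P.1 * n⌋ = i := by
      rw [Int.floor_eq_iff]
      constructor
      · have := (div_lt_iff₀ hN).1 h1; linarith
      · have := (lt_div_iff₀ hN).1 h2; push_cast; linarith
    have e2 : ⌊P.1 * n⌋ = i' := by
      rw [Int.floor_eq_iff]
      constructor
      · have := (div_lt_iff₀ hN).1 h1'; linarith
      · have := (lt_div_iff₀ hN).1 h2'; push_cast; linarith
    omega
  · have e1 : ⌊P.2 * n⌋ = j := by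
      rw [Int.floor_eq_iff]
      constructor
      · have := (div_lt_iff₀ hN).1 h3; linarith
      · have := (lt_div_iff₀ hN).1 h4; push_cast; linarith
    have e2 : ⌊P.2 * n⌋ = j' := by
      rw [Int.floor_eq_iff]
      constructor
      · have := (div_lt_iff₀ hN).1 h3'; linarith
      · have := (lt_div_iff₀ hN).1 h4'; push_cast; linarith
    omega

lemma int_in (hn : 1 ≤ n) {m : ℤ} (h1 : (i:ℝ)/n ≤ (m:ℝ)/n) (h2 : (m:ℝ)/n ≤ ((i:ℝ)+1)/n) :
    m = i ∨ m = i + 1 := by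
  have hN := npos hn
  have e1 : (i:ℝ) ≤ m := by
    have := (div_le_div_iff₀ hN hN).1 h1; nlinarith
  have e2 : (m:ℝ) ≤ i + 1 := by
    have := (div_le_div_iff₀ hN hN).1 h2; nlinarith
  have : i ≤ m := by exact_mod_cast e1
  have : m ≤ i + 1 := by exact_mod_cast e2
  omega

/-- the entry point of a box lies in the closed box -/
lemma entersAtPt_closure {P : ℝ × ℝ} (h : EntersAtPt n i j P) :
    (i:ℝ)/n ≤ P.1 ∧ P.1 ≤ ((i:ℝ)+1)/n ∧ (j:ℝ)/n ≤ P.2 ∧ P.2 ≤ ((j:ℝ)+1)/n := by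
  obtain ⟨t, δ, hδ, hPt, hbox⟩ := h
  have hmem : Set.Ioo t (t+δ) ∈ nhdsWithin t (Set.Ioi t) := by
    apply Ioo_mem_nhdsGT_of_mem
    constructor <;> [rfl; linarith]
  have hx : P.1 = Real.cos t := by rw [← hPt]
  have hy : P.2 = Real.sin t := by rw [← hPt]
  have tc : Filter.Tendsto Real.cos (nhdsWithin t (Set.Ioi t)) (nhds (Real.cos t)) :=
    (Real.continuous_cos.continuousAt).continuousWithinAt
  have ts : Filter.Tendsto Real.sin (nhdsWithin t (Set.Ioi t)) (nhds (Real.sin t)) :=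
    (Real.continuous_sin.continuousAt).continuousWithinAt
  refine ⟨?_, ?_, ?_, ?_⟩
  · rw [hx]
    refine ge_of_tendsto tc (Filter.eventually_of_mem hmem fun s hs => ?_)
    exact le_of_lt (hbox s hs).1
  · rw [hx]
    refine le_of_tendsto tc (Filter.eventually_of_mem hmem fun s hs => ?_)
    exact le_of_lt (hbox s hs).2.1
  · rw [hy]
    refine ge_of_tendsto ts (Filter.eventually_of_mem hmem fun s hs => ?_)
    exact le_of_lt (hbox s hs).2.2.1
  · rw [hy]
    refine le_of_tendsto ts (Filter.eventually_of_mem hmem fun s hs => ?_)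
    exact le_of_lt (hbox s hs).2.2.2

/-- angle normalization into the first quadrant -/
lemma quadrant_angle {t : ℝ} (hc : 0 ≤ Real.cos t) (hs : 0 ≤ Real.sin t) :
    ∃ k : ℤ, t - (k:ℝ) * (2*π) ∈ Set.Icc 0 (π/2) := by
  set u := toIocMod Real.two_pi_pos (-π) t with hu
  obtain ⟨k, hk⟩ : ∃ k : ℤ, t - u = (k:ℝ) * (2*π) := by
    refine ⟨toIocDiv Real.two_pi_pos (-π) t, ?_⟩
    have h := self_sub_toIocMod Real.two_pi_pos (-π) t
    rw [← hu, zsmul_eq_mul] at h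
    exact h
  have hmem := toIocMod_mem_Ioc Real.two_pi_pos (-π) t
  rw [← hu] at hmem
  have hcu : Real.cos u = Real.cos t := by
    have : t = u + (k:ℝ) * (2*π) := by linarith
    rw [this, Real.cos_add_int_mul_two_pi]
  have hsu : Real.sin u = Real.sin t := by
    have : t = u + (k:ℝ) * (2*π) := by linarith
    rw [this, Real.sin_add_int_mul_two_pi]
  have hpi := Real.pi_pos
  have h1 : -π < u := hmem.1
  have h2 : u ≤ -π + 2*π := hmem.2
  have hu0 : 0 ≤ u := by
    by_contra h
    push_neg at h
    have := Real.sin_neg_of_neg_of_neg_pi_lt h h1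
    rw [hsu] at this; linarith
  have hupi : u ≤ π/2 := by
    by_contra h
    push_neg at h
    have := Real.cos_neg_of_pi_div_two_lt_of_lt h (by linarith)
    rw [hcu] at this; linarith
  refine ⟨k, ?_⟩
  have huu : t - (k:ℝ)*(2*π) = u := by linarith
  rw [Set.mem_Icc, huu]
  exact ⟨hu0, hupi⟩

/-- normalize an entry parameter of a first-quadrant box into [0, π/2) -/
lemma normalize (hn : 1 ≤ n) (hi : 0 ≤ i) (hj : 0 ≤ j) {t δ : ℝ} (hδ : 0 < δ)
    (hbox : ∀ s ∈ Set.Ioo t (t + δ), (Real.cos s, Real.sin s) ∈ boxInt n i j)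
    (hc : 0 ≤ Real.cos t) (hs : 0 ≤ Real.sin t) :
    ∃ t' δ' : ℝ, 0 ≤ t' ∧ t' < π/2 ∧ 0 < δ' ∧ t' + δ' ≤ π/2 ∧
      Real.cos t' = Real.cos t ∧ Real.sin t' = Real.sin t ∧
      ∀ s ∈ Set.Ioo t' (t' + δ'), (Real.cos s, Real.sin s) ∈ boxInt n i j := by
  have hN := npos hn
  have hpi := Real.pi_pos
  obtain ⟨k, hk⟩ := quadrant_angle hc hs
  set t' := t - (k:ℝ) * (2*π) with ht'
  have hct : Real.cos t' = Real.cos t := by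
    have : t = t' + (k:ℝ) * (2*π) := by ring
    rw [this, Real.cos_add_int_mul_two_pi]
  have hst : Real.sin t' = Real.sin t := by
    have : t = t' + (k:ℝ) * (2*π) := by ring
    rw [this, Real.sin_add_int_mul_two_pi]
  set δ₁ := min δ 1 with hδ₁
  have hδ₁0 : 0 < δ₁ := lt_min hδ one_pos
  have hδ₁1 : δ₁ ≤ 1 := min_le_right _ _
  have hbox' : ∀ s ∈ Set.Ioo t' (t' + δ₁), (Real.cos s, Real.sin s) ∈ boxInt n i j := by
    intro s hs'
    have h1 : s + (k:ℝ) * (2*π) ∈ Set.Ioo t (t + δ) := by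
      constructor
      · have := hs'.1; simp only [ht'] at this ⊢; linarith
      · have := hs'.2
        have h2 : δ₁ ≤ δ := min_le_left _ _
        simp only [ht'] at this ⊢; linarith
    have := hbox _ h1
    rwa [Real.cos_add_int_mul_two_pi, Real.sin_add_int_mul_two_pi] at this
  -- every point of the entry interval has parameter < π/2
  have hlt : ∀ s ∈ Set.Ioo t' (t' + δ₁), s < π/2 := by
    intro s hs'
    by_contra h
    push_neg at h
    have hb := hbox' s hs'
    have hcs : 0 < Real.cos s := by
      have h1 : (0:ℝ) ≤ (i:ℝ)/n := by
        apply div_nonneg _ (le_of_lt hN)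
        exact_mod_cast hi
      exact lt_of_le_of_lt h1 hb.1
    have h2 : s ≤ π + π/2 := by
      have := hs'.2
      have h3 : t' ≤ π/2 := hk.2
      have h4 : (1:ℝ) < π := by
        have := Real.pi_gt_three; linarith
      linarith
    have := Real.cos_nonpos_of_pi_div_two_le_of_le h h2
    linarith
  have ht'0 : 0 ≤ t' := hk.1
  have ht'lt : t' < π/2 := by
    have hmid : t' + δ₁/2 ∈ Set.Ioo t' (t' + δ₁) := by constructor <;> linarith
    have := hlt _ hmid
    linarith
  refine ⟨t', min δ₁ (π/2 - t'), ht'0, ht'lt, lt_min hδ₁0 (by linarith), by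
      have := min_le_right δ₁ (π/2 - t'); linarith, hct, hst, ?_⟩
  intro s hs'
  apply hbox'
  have := min_le_left δ₁ (π/2 - t')
  exact ⟨hs'.1, lt_of_lt_of_le hs'.2 (by linarith)⟩

/-- key uniqueness: two entry points of a first-quadrant box coincide,
provided each lies on the boundary grid lines. -/
lemma entersAt_eq (hn : 1 ≤ n) (hi : 0 ≤ i) (hj : 0 ≤ j) {P₁ P₂ : ℝ × ℝ}
    (h₁ : EntersAtPt n i j P₁) (h₂ : EntersAtPt n i j P₂)
    (hb₁ : P₁.1 = (i:ℝ)/n ∨ P₁.1 = ((i:ℝ)+1)/n ∨ P₁.2 = (j:ℝ)/n ∨ P₁.2 = ((j:ℝ)+1)/n)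
    (hb₂ : P₂.1 = (i:ℝ)/n ∨ P₂.1 = ((i:ℝ)+1)/n ∨ P₂.2 = (j:ℝ)/n ∨ P₂.2 = ((j:ℝ)+1)/n) :
    P₁ = P₂ := by
  have hN := npos hn
  have hpi := Real.pi_pos
  -- nonnegativity of coordinates
  have hin : (0:ℝ) ≤ (i:ℝ)/n := div_nonneg (by exact_mod_cast hi) (le_of_lt hN)
  have hjn : (0:ℝ) ≤ (j:ℝ)/n := div_nonneg (by exact_mod_cast hj) (le_of_lt hN)
  have hcl₁ := entersAtPt_closure h₁
  have hcl₂ := entersAtPt_closure h₂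
  obtain ⟨t₁, δ₁, hδ₁, hP₁, hbox₁⟩ := h₁
  obtain ⟨t₂, δ₂, hδ₂, hP₂, hbox₂⟩ := h₂
  have hx₁ : Real.cos t₁ = P₁.1 := by rw [← hP₁]
  have hy₁ : Real.sin t₁ = P₁.2 := by rw [← hP₁]
  have hx₂ : Real.cos t₂ = P₂.1 := by rw [← hP₂]
  have hy₂ : Real.sin t₂ = P₂.2 := by rw [← hP₂]
  obtain ⟨u₁, ε₁, hu₁0, hu₁lt, hε₁, hu₁le, hcu₁, hsu₁, hB₁⟩ :=
    normalize hn hi hj hδ₁ hbox₁ (by rw [hx₁]; linarith [hcl₁.1]) (by rw [hy₁]; linarith [hcl₁.2.2.1])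
  obtain ⟨u₂, ε₂, hu₂0, hu₂lt, hε₂, hu₂le, hcu₂, hsu₂, hB₂⟩ :=
    normalize hn hi hj hδ₂ hbox₂ (by rw [hx₂]; linarith [hcl₂.1]) (by rw [hy₂]; linarith [hcl₂.2.2.1])
  -- monotonicity facts on [0, π/2]
  have cosmono : ∀ {a b : ℝ}, 0 ≤ a → a < b → b ≤ π/2 → Real.cos b < Real.cos a := by
    intro a b ha hab hb
    apply Real.strictAntiOn_cos ⟨ha, by linarith⟩ ⟨by linarith, by linarith⟩ hab
  have sinmono : ∀ {a b : ℝ}, 0 ≤ a → a < b → b ≤ π/2 → Real.sin a < Real.sin b := by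
    intro a b ha hab hb
    apply Real.strictMonoOn_sin ⟨by linarith, by linarith⟩ ⟨by linarith, by linarith⟩ hab
  -- rule out entry on the left / top sides
  have noleft : ∀ (u ε : ℝ), 0 ≤ u → 0 < ε → u + ε ≤ π/2 →
      (∀ s ∈ Set.Ioo u (u + ε), (Real.cos s, Real.sin s) ∈ boxInt n i j) →
      Real.cos u ≠ (i:ℝ)/n ∧ Real.sin u ≠ ((j:ℝ)+1)/n := by
    intro u ε hu hε hle hB
    have hmid : u + ε/2 ∈ Set.Ioo u (u + ε) := by constructor <;> linarith
    have hb := hB _ hmid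
    constructor
    · intro hcu
      have := cosmono hu (by linarith : u < u + ε/2) (by linarith)
      rw [hcu] at this
      have := hb.1
      linarith
    · intro hsu
      have := sinmono hu (by linarith : u < u + ε/2) (by linarith)
      rw [hsu] at this
      have := hb.2.2.2
      linarith
  -- main trichotomy
  have key : u₁ = u₂ := by
    rcases lt_trichotomy u₁ u₂ with h | h | h
    · exfalso
      -- pick s₁ ∈ (u₁, min u₂ (u₁+ε₁))
      set s₁ := (u₁ + min u₂ (u₁ + ε₁))/2 with hs₁
      have hs₁l : u₁ < s₁ := by
        have h1 : u₁ < min u₂ (u₁ + ε₁) := lt_min h (by linarith)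
        simp only [hs₁]; linarith
      have hs₁r : s₁ < min u₂ (u₁ + ε₁) := by
        have h1 : u₁ < min u₂ (u₁ + ε₁) := lt_min h (by linarith)
        simp only [hs₁]; linarith
      have hs₁u₂ : s₁ < u₂ := lt_of_lt_of_le hs₁r (min_le_left _ _)
      have hb₁' := hB₁ s₁ ⟨hs₁l, lt_of_lt_of_le hs₁r (min_le_right _ _)⟩
      have hs₁0 : 0 ≤ s₁ := by linarith
      -- boundary condition at u₂
      rcases hb₂ with hx | hx | hx | hx
      · exact (noleft u₂ ε₂ hu₂0 hε₂ hu₂le hB₂).1 (by rw [hcu₂, hx₂]; exact hx)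
      · -- cos u₂ = (i+1)/n but cos s₁ < (i+1)/n and s₁ < u₂ : cos u₂ < cos s₁
        have hcu : Real.cos u₂ = ((i:ℝ)+1)/n := by rw [hcu₂, hx₂]; exact hx
        have h1 := cosmono hs₁0 hs₁u₂ (le_of_lt hu₂lt)
        have := hb₁'.2.1
        rw [hcu] at h1
        linarith
      · -- sin u₂ = j/n but sin s₁ > j/n and s₁ < u₂ : sin s₁ < sin u₂
        have hsu : Real.sin u₂ = (j:ℝ)/n := by rw [hsu₂, hy₂]; exact hx
        have h1 := sinmono hs₁0 hs₁u₂ (le_of_lt hu₂lt)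
        have := hb₁'.2.2.1
        rw [hsu] at h1
        linarith
      · exact (noleft u₂ ε₂ hu₂0 hε₂ hu₂le hB₂).2 (by rw [hsu₂, hy₂]; exact hx)
    · exact h
    · exfalso
      set s₂ := (u₂ + min u₁ (u₂ + ε₂))/2 with hs₂
      have hs₂l : u₂ < s₂ := by
        have h1 : u₂ < min u₁ (u₂ + ε₂) := lt_min h (by linarith)
        simp only [hs₂]; linarith
      have hs₂r : s₂ < min u₁ (u₂ + ε₂) := by
        have h1 : u₂ < min u₁ (u₂ + ε₂) := lt_min h (by linarith)
        simp only [hs₂]; linarith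
      have hs₂u₁ : s₂ < u₁ := lt_of_lt_of_le hs₂r (min_le_left _ _)
      have hb₂' := hB₂ s₂ ⟨hs₂l, lt_of_lt_of_le hs₂r (min_le_right _ _)⟩
      have hs₂0 : 0 ≤ s₂ := by linarith
      rcases hb₁ with hx | hx | hx | hx
      · exact (noleft u₁ ε₁ hu₁0 hε₁ hu₁le hB₁).1 (by rw [hcu₁, hx₁]; exact hx)
      · have hcu : Real.cos u₁ = ((i:ℝ)+1)/n := by rw [hcu₁, hx₁]; exact hx
        have h1 := cosmono hs₂0 hs₂u₁ (le_of_lt hu₁lt)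
        have := hb₂'.2.1
        rw [hcu] at h1
        linarith
      · have hsu : Real.sin u₁ = (j:ℝ)/n := by rw [hsu₁, hy₁]; exact hx
        have h1 := sinmono hs₂0 hs₂u₁ (le_of_lt hu₁lt)
        have := hb₂'.2.2.1
        rw [hsu] at h1
        linarith
      · exact (noleft u₁ ε₁ hu₁0 hε₁ hu₁le hB₁).2 (by rw [hsu₁, hy₁]; exact hx)
  have e1 : P₁.1 = P₂.1 := by rw [← hx₁, ← hx₂, ← hcu₁, ← hcu₂, key]
  have e2 : P₁.2 = P₂.2 := by rw [← hy₁, ← hy₂, ← hsu₁, ← hsu₂, key]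
  exact Prod.ext e1 e2

/-- circle entry for a lattice point in the sector p > 0, q ≥ 0 -/
lemma sector_enters (hn : 1 ≤ n) {p q : ℤ} (hp : 0 < p) (hq : 0 ≤ q)
    (hpq : p^2 + q^2 = (n:ℤ)^2) :
    EntersAtPt n (p-1) q ((p:ℝ)/n, (q:ℝ)/n) := by
  have hN := npos hn
  have hpi := Real.pi_pos
  have hpqR : (p:ℝ)^2 + (q:ℝ)^2 = (n:ℝ)^2 := by exact_mod_cast hpq
  have hpR : (0:ℝ) < p := by exact_mod_cast hp
  have hqR : (0:ℝ) ≤ q := by exact_mod_cast hq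
  have hpn : (p:ℝ) ≤ n := by nlinarith
  have hp1 : 0 < (p:ℝ)/n := div_pos hpR hN
  have hple : (p:ℝ)/n ≤ 1 := by rw [div_le_one hN]; exact hpn
  set t₀ := Real.arccos ((p:ℝ)/n) with ht₀
  have hcos : Real.cos t₀ = (p:ℝ)/n := Real.cos_arccos (by linarith) hple
  have hsin : Real.sin t₀ = (q:ℝ)/n := by
    rw [ht₀, Real.sin_arccos]
    have h1 : 1 - ((p:ℝ)/n)^2 = ((q:ℝ)/n)^2 := by
      field_simp
      linarith
    rw [h1, Real.sqrt_sq (div_nonneg hqR (le_of_lt hN))]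
  have ht₀0 : 0 ≤ t₀ := Real.arccos_nonneg _
  have ht₀lt : t₀ < π/2 := Real.arccos_lt_pi_div_two.2 hp1
  -- open conditions by continuity
  have hU : IsOpen {s : ℝ | ((p:ℝ)-1)/n < Real.cos s ∧ Real.sin s < ((q:ℝ)+1)/n} :=
    (isOpen_lt continuous_const Real.continuous_cos).inter
      (isOpen_lt Real.continuous_sin continuous_const)
  have ht₀U : t₀ ∈ {s : ℝ | ((p:ℝ)-1)/n < Real.cos s ∧ Real.sin s < ((q:ℝ)+1)/n} := by
    constructor
    · rw [hcos, div_lt_div_iff_of_pos_right hN]; linarith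
    · rw [hsin, div_lt_div_iff_of_pos_right hN]; linarith
  obtain ⟨ε, hε, hball⟩ := Metric.isOpen_iff.1 hU t₀ ht₀U
  refine ⟨t₀, min ε (π/2 - t₀), lt_min hε (by linarith), by rw [hcos, hsin], ?_⟩
  intro s hs
  have hs1 : t₀ < s := hs.1
  have hs2 : s < t₀ + ε := lt_of_lt_of_le hs.2 (by have := min_le_left ε (π/2 - t₀); linarith)
  have hs3 : s ≤ π/2 := by
    have := min_le_right ε (π/2 - t₀)
    have := hs.2
    linarith
  have hsU := hball (by
    rw [Metric.mem_ball, Real.dist_eq, abs_of_pos (by linarith : (0:ℝ) < s - t₀)]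
    linarith)
  have hcs : Real.cos s < (p:ℝ)/n := by
    rw [← hcos]
    exact Real.strictAntiOn_cos ⟨ht₀0, by linarith⟩ ⟨by linarith, by linarith⟩ hs1
  have hss : (q:ℝ)/n < Real.sin s := by
    rw [← hsin]
    exact Real.strictMonoOn_sin ⟨by linarith, by linarith⟩ ⟨by linarith, by linarith⟩ hs1
  refine ⟨?_, ?_, ?_, ?_⟩
  · show ((p - 1 : ℤ):ℝ)/n < Real.cos s
    push_cast
    exact hsU.1
  · show Real.cos s < (((p - 1 : ℤ):ℝ) + 1)/n
    push_cast
    convert hcs using 2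
    ring
  · exact hss
  · exact hsU.2

/-- rotating a point by 90 degrees counter-clockwise -/
def rot (P : ℝ × ℝ) : ℝ × ℝ := (-P.2, P.1)

lemma rot_inj {P Q : ℝ × ℝ} (h : rot P = rot Q) : P = Q := by
  simp only [rot, Prod.ext_iff] at h ⊢
  exact ⟨h.2, by linarith [h.1]⟩

lemma box_iff (hn : 1 ≤ n) {P : ℝ × ℝ} :
    P ∈ boxInt n i j ↔
      ((i:ℝ) < P.1 * n ∧ P.1 * n < (i:ℝ)+1 ∧ (j:ℝ) < P.2 * n ∧ P.2 * n < (j:ℝ)+1) := by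
  have hN := npos hn
  simp only [boxInt, Set.mem_setOf_eq, div_lt_iff₀ hN, lt_div_iff₀ hN]

lemma step_box (hn : 1 ≤ n) {P : ℝ × ℝ} (h : P ∈ boxInt n i j) :
    rot P ∈ boxInt n (-j-1) i := by
  rw [box_iff hn] at h ⊢
  obtain ⟨h1, h2, h3, h4⟩ := h
  simp only [rot]
  push_cast
  refine ⟨by linarith, by linarith, h1, h2⟩

lemma step_enters (hn : 1 ≤ n) {P : ℝ × ℝ} (h : EntersAtPt n i j P) :
    EntersAtPt n (-j-1) i (rot P) := by
  obtain ⟨t, δ, hδ, hPt, hbox⟩ := h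
  refine ⟨t + π/2, δ, hδ, ?_, ?_⟩
  · rw [Real.cos_add_pi_div_two, Real.sin_add_pi_div_two, ← hPt]
    rfl
  · intro s hs
    have h1 : s - π/2 ∈ Set.Ioo t (t + δ) := by
      obtain ⟨a, b⟩ := hs
      constructor <;> linarith
    have h2 := step_box hn (hbox _ h1)
    have e1 : Real.cos s = -Real.sin (s - π/2) := by
      rw [show s = (s - π/2) + π/2 by ring, Real.cos_add_pi_div_two]
      ring_nf
    have e2 : Real.sin s = Real.cos (s - π/2) := by
      rw [show s = (s - π/2) + π/2 by ring, Real.sin_add_pi_div_two]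
      ring_nf
    rw [show (Real.cos s, Real.sin s) = rot (Real.cos (s - π/2), Real.sin (s - π/2)) by
      simp only [rot]; rw [e1, e2]]
    exact h2

lemma step_corner (hn : 1 ≤ n) {P : ℝ × ℝ} (h : OnBoxCorner n i j P) :
    OnBoxCorner n (-j-1) i (rot P) := by
  have hN := npos hn
  obtain ⟨h1, h2⟩ := h
  constructor
  · show -P.2 = ((-j-1:ℤ):ℝ)/n ∨ -P.2 = (((-j-1:ℤ):ℝ)+1)/n
    push_cast
    rcases h2 with h | h
    · right; rw [h]; ring
    · left; rw [h]; ring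
  · exact h1

lemma step_vert (hn : 1 ≤ n) {P : ℝ × ℝ} (h : OnVerticalSide n i j P) :
    OnHorizontalSide n (-j-1) i (rot P) := by
  obtain ⟨h1, h2, h3⟩ := h
  refine ⟨h1, ?_, ?_⟩
  · show ((-j-1:ℤ):ℝ)/n ≤ -P.2
    push_cast
    have e : (-(j:ℝ)-1)/n = -(((j:ℝ)+1)/n) := by ring
    rw [e]
    linarith
  · show -P.2 ≤ (((-j-1:ℤ):ℝ)+1)/n
    push_cast
    have e : (-(j:ℝ)-1+1)/n = -((j:ℝ)/n) := by ring
    rw [e]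
    linarith

lemma step_horiz (hn : 1 ≤ n) {P : ℝ × ℝ} (h : OnHorizontalSide n i j P) :
    OnVerticalSide n (-j-1) i (rot P) := by
  have hN := npos hn
  obtain ⟨h1, h2, h3⟩ := h
  constructor
  · show -P.2 = ((-j-1:ℤ):ℝ)/n ∨ -P.2 = (((-j-1:ℤ):ℝ)+1)/n
    push_cast
    rcases h1 with h | h
    · right; rw [h]; ring
    · left; rw [h]; ring
  · exact ⟨h2, h3⟩

lemma enters_Psi (hn : 1 ≤ n) {p q : ℤ} (hpq : p^2 + q^2 = (n:ℤ)^2) :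
    EntersAtPt n (Psi (p,q)).1 (Psi (p,q)).2 ((p:ℝ)/n, (q:ℝ)/n) := by
  have hne : ¬(p = 0 ∧ q = 0) := by
    rintro ⟨rfl, rfl⟩
    have : (n:ℤ) ≠ 0 := by exact_mod_cast Nat.one_le_iff_ne_zero.1 hn
    nlinarith [hpq]
  have rotpt : ∀ (a b : ℤ), rot (((a:ℤ):ℝ)/n, ((b:ℤ):ℝ)/n) = (((-b:ℤ):ℝ)/n, ((a:ℤ):ℝ)/n) := by
    intro a b
    simp only [rot, Prod.mk.injEq]
    constructor
    · push_cast; ring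
    · trivial
  rcases (by omega : (0 < p ∧ 0 ≤ q) ∨ (p ≤ 0 ∧ 0 < q) ∨ (p < 0 ∧ q ≤ 0) ∨ (0 ≤ p ∧ q < 0))
    with ⟨h1, h2⟩ | ⟨h1, h2⟩ | ⟨h1, h2⟩ | ⟨h1, h2⟩
  · have h := sector_enters hn h1 h2 hpq
    have hΨ : Psi (p,q) = (p-1, q) := by
      simp only [Psi]
      rw [if_pos (by omega : (0:ℤ) < q ∨ (q = 0 ∧ 0 < p)),
        if_pos (by omega : (0:ℤ) < p ∨ (p = 0 ∧ q < 0))]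
    rw [hΨ]
    exact h
  · have h := sector_enters hn h2 (by omega : (0:ℤ) ≤ -p) (by linear_combination hpq)
    have h2' := step_enters hn h
    rw [rotpt] at h2'
    rw [show -(-p) - 1 = p - 1 by ring, show (- -p : ℤ) = p by ring] at h2'
    have hΨ : Psi (p,q) = (p-1, q-1) := by
      simp only [Psi]
      rw [if_pos (by omega : (0:ℤ) < q ∨ (q = 0 ∧ 0 < p)),
        if_neg (by omega : ¬((0:ℤ) < p ∨ (p = 0 ∧ q < 0)))]
    rw [hΨ]
    exact h2'
  · have h := sector_enters hn (by omega : (0:ℤ) < -p) (by omega : (0:ℤ) ≤ -q)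
      (by linear_combination hpq)
    have h2' := step_enters hn h
    rw [rotpt] at h2'
    rw [show -(-q) - 1 = q - 1 by ring, show (- -q : ℤ) = q by ring] at h2'
    have h3' := step_enters hn h2'
    rw [rotpt] at h3'
    rw [show -(-p - 1) - 1 = p by ring, show (- -p : ℤ) = p by ring] at h3'
    have hΨ : Psi (p,q) = (p, q-1) := by
      simp only [Psi]
      rw [if_neg (by omega : ¬((0:ℤ) < q ∨ (q = 0 ∧ 0 < p))),
        if_neg (by omega : ¬((0:ℤ) < p ∨ (p = 0 ∧ q < 0)))]
    rw [hΨ]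
    exact h3'
  · have h := sector_enters hn (by omega : (0:ℤ) < -q) h1 (by linear_combination hpq)
    have h2' := step_enters hn h
    rw [rotpt] at h2'
    rw [show -(p:ℤ) - 1 = -p-1 by ring] at h2'
    have h3' := step_enters hn h2'
    rw [rotpt] at h3'
    rw [show -(-q-1) - 1 = q by ring, show (- -q : ℤ) = q by ring] at h3'
    have h4' := step_enters hn h3'
    rw [rotpt] at h4'
    rw [show -(-p-1) - 1 = p by ring, show (- -p : ℤ) = p by ring] at h4'
    have hΨ : Psi (p,q) = (p, q) := by
      simp only [Psi]
      rw [if_neg (by omega : ¬((0:ℤ) < q ∨ (q = 0 ∧ 0 < p))),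
        if_pos (by omega : (0:ℤ) < p ∨ (p = 0 ∧ q < 0))]
    rw [hΨ]
    exact h4'

lemma same_entry (hn : 1 ≤ n) {i' j' : ℤ} {P : ℝ × ℝ}
    (h : EntersAtPt n i j P) (h' : EntersAtPt n i' j' P) : i = i' ∧ j = j' := by
  obtain ⟨t, δ, hδ, hPt, hbox⟩ := h
  obtain ⟨t', δ', hδ', hPt', hbox'⟩ := h'
  have hcs : Real.cos t' = Real.cos t ∧ Real.sin t' = Real.sin t := by
    have h0 := hPt'.trans hPt.symm
    rw [Prod.mk.injEq] at h0
    exact h0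
  have hone : Real.cos (t' - t) = 1 := by
    rw [Real.cos_sub, hcs.1, hcs.2]
    nlinarith [Real.sin_sq_add_cos_sq t]
  obtain ⟨k, hk⟩ := (Real.cos_eq_one_iff _).1 hone
  set ε := min δ δ' / 2 with hε
  have hε0 : 0 < ε := by
    simp only [hε]
    linarith [lt_min hδ hδ']
  have hεδ : ε < δ := by
    have := min_le_left δ δ'
    simp only [hε]; linarith
  have hεδ' : ε < δ' := by
    have := min_le_right δ δ'
    simp only [hε]; linarith
  have hb1 := hbox (t + ε) ⟨by linarith, by linarith⟩
  have hb2 := hbox' (t' + ε) ⟨by linarith, by linarith⟩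
  have he : (Real.cos (t' + ε), Real.sin (t' + ε)) = (Real.cos (t + ε), Real.sin (t + ε)) := by
    have h0 : t' + ε = (t + ε) + (k:ℝ) * (2*π) := by linarith [hk]
    rw [h0, Real.cos_add_int_mul_two_pi, Real.sin_add_int_mul_two_pi]
  rw [he] at hb2
  exact box_disjoint hn hb1 hb2

lemma lattice_corner (hn : 1 ≤ n) {a b : ℤ}
    (h : EntersAtPt n i j ((a:ℝ)/n, (b:ℝ)/n)) : OnBoxCorner n i j ((a:ℝ)/n, (b:ℝ)/n) := by
  have hcl := entersAtPt_closure h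
  constructor
  · rcases int_in hn hcl.1 hcl.2.1 with rfl | rfl
    · left; rfl
    · right; push_cast; ring
  · rcases int_in hn hcl.2.2.1 hcl.2.2.2 with rfl | rfl
    · left; rfl
    · right; push_cast; ring

lemma vertex_to_VH (hn : 1 ≤ n) (h : EntersAtVertex n i j) :
    IsVertical n i j ∧ IsHorizontal n i j := by
  have hN := npos hn
  obtain ⟨t, δ, hδ, ⟨hcx, hcy⟩, hbox⟩ := h
  have hle1 : (i:ℝ)/n ≤ ((i:ℝ)+1)/n :=
    le_of_lt ((div_lt_div_iff_of_pos_right hN).2 (by linarith))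
  have hle2 : (j:ℝ)/n ≤ ((j:ℝ)+1)/n :=
    le_of_lt ((div_lt_div_iff_of_pos_right hN).2 (by linarith))
  constructor
  · refine ⟨t, δ, hδ, ⟨hcx, ?_, ?_⟩, hbox⟩
    · rcases hcy with h | h <;> rw [h]
      · linarith
    · rcases hcy with h | h <;> rw [h]
      · linarith
  · refine ⟨t, δ, hδ, ⟨hcy, ?_, ?_⟩, hbox⟩
    · rcases hcx with h | h <;> rw [h]
      · linarith
    · rcases hcx with h | h <;> rw [h]
      · linarith

lemma enters_approx {P : ℝ × ℝ} (h : EntersAtPt n i j P) :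
    (i, j) ∈ approx n unitCircle := by
  obtain ⟨t, δ, hδ, hPt, hbox⟩ := h
  refine ⟨(Real.cos (t + δ/2), Real.sin (t + δ/2)), hbox _ ⟨by linarith, by linarith⟩, ?_⟩
  simp only [unitCircle, Set.mem_setOf_eq]
  exact Real.cos_sq_add_sin_sq _


lemma isVert_step (hn : 1 ≤ n) (h : IsVertical n i j) : IsHorizontal n (-j-1) i := by
  obtain ⟨t, δ, hδ, hside, hbox⟩ := h
  have hE : EntersAtPt n i j (Real.cos t, Real.sin t) := ⟨t, δ, hδ, rfl, hbox⟩
  obtain ⟨t', δ', hδ', hPt', hbox'⟩ := step_enters hn hE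
  exact ⟨t', δ', hδ', by rw [hPt']; exact step_vert hn hside, hbox'⟩

lemma isHoriz_step (hn : 1 ≤ n) (h : IsHorizontal n i j) : IsVertical n (-j-1) i := by
  obtain ⟨t, δ, hδ, hside, hbox⟩ := h
  have hE : EntersAtPt n i j (Real.cos t, Real.sin t) := ⟨t, δ, hδ, rfl, hbox⟩
  obtain ⟨t', δ', hδ', hPt', hbox'⟩ := step_enters hn hE
  exact ⟨t', δ', hδ', by rw [hPt']; exact step_horiz hn hside, hbox'⟩

lemma vertex_step (hn : 1 ≤ n) (h : EntersAtVertex n i j) : EntersAtVertex n (-j-1) i := by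
  obtain ⟨t, δ, hδ, hside, hbox⟩ := h
  have hE : EntersAtPt n i j (Real.cos t, Real.sin t) := ⟨t, δ, hδ, rfl, hbox⟩
  obtain ⟨t', δ', hδ', hPt', hbox'⟩ := step_enters hn hE
  exact ⟨t', δ', hδ', by rw [hPt']; exact step_corner hn hside, hbox'⟩

lemma vertSide_bd {P : ℝ × ℝ} (h : OnVerticalSide n i j P) :
    P.1 = (i:ℝ)/n ∨ P.1 = ((i:ℝ)+1)/n ∨ P.2 = (j:ℝ)/n ∨ P.2 = ((j:ℝ)+1)/n := by
  rcases h.1 with h' | h'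
  · exact Or.inl h'
  · exact Or.inr (Or.inl h')

lemma horizSide_bd {P : ℝ × ℝ} (h : OnHorizontalSide n i j P) :
    P.1 = (i:ℝ)/n ∨ P.1 = ((i:ℝ)+1)/n ∨ P.2 = (j:ℝ)/n ∨ P.2 = ((j:ℝ)+1)/n := by
  rcases h.1 with h' | h'
  · exact Or.inr (Or.inr (Or.inl h'))
  · exact Or.inr (Or.inr (Or.inr h'))

lemma VH_to_vertex_Q1 (hn : 1 ≤ n) (hi : 0 ≤ i) (hj : 0 ≤ j)
    (hV : IsVertical n i j) (hH : IsHorizontal n i j) : EntersAtVertex n i j := by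
  obtain ⟨t₁, δ₁, hδ₁, hside₁, hbox₁⟩ := hV
  obtain ⟨t₂, δ₂, hδ₂, hside₂, hbox₂⟩ := hH
  have hE₁ : EntersAtPt n i j (Real.cos t₁, Real.sin t₁) := ⟨t₁, δ₁, hδ₁, rfl, hbox₁⟩
  have hE₂ : EntersAtPt n i j (Real.cos t₂, Real.sin t₂) := ⟨t₂, δ₂, hδ₂, rfl, hbox₂⟩
  have hPP := entersAt_eq hn hi hj hE₁ hE₂ (vertSide_bd hside₁) (horizSide_bd hside₂)
  refine ⟨t₁, δ₁, hδ₁, ⟨hside₁.1, ?_⟩, hbox₁⟩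
  have : (Real.cos t₁, Real.sin t₁).2 = (Real.cos t₂, Real.sin t₂).2 := by rw [hPP]
  rw [this]
  exact hside₂.1

lemma VH_to_vertex (hn : 1 ≤ n) (hV : IsVertical n i j) (hH : IsHorizontal n i j) :
    EntersAtVertex n i j := by
  rcases (by omega : (0 ≤ i ∧ 0 ≤ j) ∨ (i < 0 ∧ 0 ≤ j) ∨ (i < 0 ∧ j < 0) ∨ (0 ≤ i ∧ j < 0))
    with ⟨h1, h2⟩ | ⟨h1, h2⟩ | ⟨h1, h2⟩ | ⟨h1, h2⟩
  · exact VH_to_vertex_Q1 hn h1 h2 hV hH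
  · -- second quadrant : three steps
    have hV1 := isVert_step hn hV
    have hH1 := isHoriz_step hn hH
    have hV2 := isHoriz_step hn hV1
    have hH2 := isVert_step hn hH1
    have hV3 := isVert_step hn hV2
    have hH3 := isHoriz_step hn hH2
    rw [show -(-j-1) - 1 = j by ring] at hV3 hH3
    have hE := VH_to_vertex_Q1 hn (by omega : (0:ℤ) ≤ j) (by omega : (0:ℤ) ≤ -i-1) hH3 hV3
    have hE1 := vertex_step hn hE
    rw [show -(-i-1) - 1 = i by ring] at hE1
    exact hE1
  · -- third quadrant : two steps
    have hV1 := isVert_step hn hV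
    have hH1 := isHoriz_step hn hH
    have hV2 := isHoriz_step hn hV1
    have hH2 := isVert_step hn hH1
    have hE := VH_to_vertex_Q1 hn (by omega : (0:ℤ) ≤ -i-1) (by omega : (0:ℤ) ≤ -j-1) hV2 hH2
    have hE1 := vertex_step hn hE
    rw [show -(-j-1) - 1 = j by ring] at hE1
    have hE2 := vertex_step hn hE1
    rw [show -(-i-1) - 1 = i by ring] at hE2
    exact hE2
  · -- fourth quadrant : one step
    have hV1 := isVert_step hn hV
    have hH1 := isHoriz_step hn hH
    have hE := VH_to_vertex_Q1 hn (by omega : (0:ℤ) ≤ -j-1) (by omega : (0:ℤ) ≤ i) hH1 hV1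
    have hE1 := vertex_step hn hE
    have hE2 := vertex_step hn hE1
    rw [show -(-j-1) - 1 = j by ring] at hE2
    have hE3 := vertex_step hn hE2
    rw [show -(-i-1) - 1 = i by ring] at hE3
    exact hE3

lemma corner_bd {P : ℝ × ℝ} (h : OnBoxCorner n i j P) :
    P.1 = (i:ℝ)/n ∨ P.1 = ((i:ℝ)+1)/n ∨ P.2 = (j:ℝ)/n ∨ P.2 = ((j:ℝ)+1)/n := by
  rcases h.1 with h' | h'
  · exact Or.inl h'
  · exact Or.inr (Or.inl h')

lemma corner_entry_unique (hn : 1 ≤ n) {P P' : ℝ × ℝ}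
    (h : EntersAtPt n i j P) (h' : EntersAtPt n i j P')
    (hc : OnBoxCorner n i j P) (hc' : OnBoxCorner n i j P') : P = P' := by
  rcases (by omega : (0 ≤ i ∧ 0 ≤ j) ∨ (i < 0 ∧ 0 ≤ j) ∨ (i < 0 ∧ j < 0) ∨ (0 ≤ i ∧ j < 0))
    with ⟨h1, h2⟩ | ⟨h1, h2⟩ | ⟨h1, h2⟩ | ⟨h1, h2⟩
  · exact entersAt_eq hn h1 h2 h h' (corner_bd hc) (corner_bd hc')
  · have e1 := step_enters hn (step_enters hn (step_enters hn h))
    have e1' := step_enters hn (step_enters hn (step_enters hn h'))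
    have c1 := step_corner hn (step_corner hn (step_corner hn hc))
    have c1' := step_corner hn (step_corner hn (step_corner hn hc'))
    rw [show -(-j-1) - 1 = j by ring] at e1 e1' c1 c1'
    have := entersAt_eq hn (by omega : (0:ℤ) ≤ j) (by omega : (0:ℤ) ≤ -i-1) e1 e1'
      (corner_bd c1) (corner_bd c1')
    exact rot_inj (rot_inj (rot_inj this))
  · have e1 := step_enters hn (step_enters hn h)
    have e1' := step_enters hn (step_enters hn h')
    have c1 := step_corner hn (step_corner hn hc)
    have c1' := step_corner hn (step_corner hn hc')
    have := entersAt_eq hn (by omega : (0:ℤ) ≤ -i-1) (by omega : (0:ℤ) ≤ -j-1) e1 e1'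
      (corner_bd c1) (corner_bd c1')
    exact rot_inj (rot_inj this)
  · have e1 := step_enters hn h
    have e1' := step_enters hn h'
    have c1 := step_corner hn hc
    have c1' := step_corner hn hc'
    have := entersAt_eq hn (by omega : (0:ℤ) ≤ -j-1) (by omega : (0:ℤ) ≤ i) e1 e1'
      (corner_bd c1) (corner_bd c1')
    exact rot_inj this

lemma vertex_of_lattice (hn : 1 ≤ n) {a b : ℤ}
    (h : EntersAtPt n i j ((a:ℝ)/n, (b:ℝ)/n)) : EntersAtVertex n i j := by
  have hc := lattice_corner hn h
  obtain ⟨t, δ, hδ, hPt, hbox⟩ := h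
  exact ⟨t, δ, hδ, by rw [hPt]; exact hc, hbox⟩

end Aux


theorem vertical_and_horizontal_eq_entersAtVertex (n : ℕ) (hn : 1 ≤ n) :
    {ij ∈ approx n unitCircle | IsVertical n ij.1 ij.2 ∧ IsHorizontal n ij.1 ij.2} =
      {ij ∈ approx n unitCircle | EntersAtVertex n ij.1 ij.2} ∧
    {ij ∈ approx n unitCircle | IsVertical n ij.1 ij.2 ∧ IsHorizontal n ij.1 ij.2}.ncard =
      r2 (n ^ 2) := by
  have hN := Aux.npos hn
  constructor
  · ext ij
    simp only [Set.mem_sep_iff]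
    constructor
    · rintro ⟨hap, hV, hH⟩
      exact ⟨hap, Aux.VH_to_vertex hn hV hH⟩
    · rintro ⟨hap, hE⟩
      exact ⟨hap, Aux.vertex_to_VH hn hE⟩
  · have hset : {ij ∈ approx n unitCircle | IsVertical n ij.1 ij.2 ∧ IsHorizontal n ij.1 ij.2} =
        Aux.Psi '' {pq : ℤ × ℤ | pq.1^2 + pq.2^2 = (n:ℤ)^2} := by
      ext ij
      simp only [Set.mem_sep_iff, Set.mem_image, Set.mem_setOf_eq]
      constructor
      · rintro ⟨hap, hV, hH⟩
        obtain ⟨t, δ, hδ, hcorner, hbox⟩ := Aux.VH_to_vertex hn hV hH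
        obtain ⟨a, ha⟩ : ∃ a : ℤ, Real.cos t = (a:ℝ)/n := by
          rcases hcorner.1 with h | h
          · exact ⟨ij.1, h⟩
          · exact ⟨ij.1 + 1, by push_cast; exact h⟩
        obtain ⟨b, hb⟩ : ∃ b : ℤ, Real.sin t = (b:ℝ)/n := by
          rcases hcorner.2 with h | h
          · exact ⟨ij.2, h⟩
          · exact ⟨ij.2 + 1, by push_cast; exact h⟩
        have hab : a^2 + b^2 = (n:ℤ)^2 := by
          have h1 : ((a:ℝ)/n)^2 + ((b:ℝ)/n)^2 = 1 := by
            rw [← ha, ← hb]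
            exact Real.cos_sq_add_sin_sq t
          have h2 : (a:ℝ)^2 + (b:ℝ)^2 = (n:ℝ)^2 := by
            field_simp at h1
            linarith
          exact_mod_cast h2
        have hE' : Aux.EntersAtPt n ij.1 ij.2 ((a:ℝ)/n, (b:ℝ)/n) :=
          ⟨t, δ, hδ, by rw [ha, hb], hbox⟩
        obtain ⟨e1, e2⟩ := Aux.same_entry hn hE' (Aux.enters_Psi hn hab)
        exact ⟨(a, b), hab, by rw [Prod.ext_iff]; exact ⟨e1.symm, e2.symm⟩⟩
      · rintro ⟨⟨a, b⟩, hab, rfl⟩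
        have h := Aux.enters_Psi hn hab
        have hvert := Aux.vertex_of_lattice hn h
        have hVH := Aux.vertex_to_VH hn hvert
        refine ⟨?_, hVH.1, hVH.2⟩
        have := Aux.enters_approx h
        rwa [Prod.mk.eta] at this
    rw [hset, Set.ncard_image_of_injOn]
    · have e : {pq : ℤ × ℤ | pq.1^2 + pq.2^2 = (n:ℤ)^2} =
          {ij : ℤ × ℤ | ij.1 ^ 2 + ij.2 ^ 2 = ((n^2 : ℕ) : ℤ)} := by
        ext pq
        simp only [Set.mem_setOf_eq]
        push_cast
        try rfl
      rw [e]
      rfl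
    · rintro ⟨p, q⟩ hpq ⟨p', q'⟩ hpq' hΨ
      simp only [Set.mem_setOf_eq] at hpq hpq'
      have h := Aux.enters_Psi hn hpq
      have h' := Aux.enters_Psi hn hpq'
      rw [← hΨ] at h'
      have hc := Aux.lattice_corner hn h
      have hc' := Aux.lattice_corner hn h'
      have heq := Aux.corner_entry_unique hn h h' hc hc'
      rw [Prod.mk.injEq] at heq
      obtain ⟨e1, e2⟩ := heq
      have hp : p = p' := by
        field_simp at e1
        exact_mod_cast e1
      have hq : q = q' := by
        field_simp at e2
        exact_mod_cast e2
      rw [Prod.mk.injEq]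
      exact ⟨hp, hq⟩
end
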